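/- arXiv:1410.1016 — 7 statements merged into one kernel-verified Lean document; each statement's English description precedes it below -/
import Mathlib

section
/- Let H be a graph with vertex subsets S1, T1, S2, T2 of k vertices each, all vertices distinct and of degree 1 in H. Suppose (S1,T1) is routed by a unique set R of k vertex-disjoint paths (the red paths), (S2,T2) is routed by a unique set B of k vertex-disjoint paths (the blue paths), every edge of H lies on exactly one path of R ∪ B, and every vertex of H not in S1∪T1∪S2∪T2 lies on exactly one red path and exactly one blue path. Orient red paths from S1 to T1 and blue paths from S2 to T2, yielding a directed graph H̃. Then H̃ contains no blue cycle, where a blue cycle is a simple directed cycle partitioned into 2r edge-disjoint consecutive segments (r ≥ 1) alternating between single red edges and nonempty all-blue paths. -/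
/-- `pathRel P u v`: `(u,v)` is a (directed) edge of one of the paths `P i`,
i.e. `u` immediately precedes `v` on some path. -/
def pathRel {V : Type} {k : ℕ} (P : Fin k → List V) (u v : V) : Prop :=
  ∃ i, [u, v] <:+: P i

/-- The undirected adjacency of the graph `H` formed by the union of the red paths `R`
and the blue paths `B`. -/
def undirAdj {V : Type} {k l : ℕ} (R : Fin k → List V) (B : Fin l → List V)
    (u v : V) : Prop :=
  pathRel R u v ∨ pathRel R v u ∨ pathRel B u v ∨ pathRel B v u

/-- The setup of the minimal two-commodity routing graph `H`: red paths `R` route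
`(S1,T1)`, blue paths `B` route `(S2,T2)`, each of size `k`; the four terminal sets are
disjoint and their vertices have degree 1 in `H`; every edge of `H` lies on exactly one
path of `R ∪ B`; every non-terminal vertex lies on one red and one blue path; `R` and `B`
are the unique routings of their respective pairs in `H`. -/
structure TwoCommodity (V : Type) (k : ℕ) where
  S1 : Set V
  T1 : Set V
  S2 : Set V
  T2 : Set V
  R : Fin k → List V
  B : Fin k → List V
  cardS1 : S1.ncard = k
  cardT1 : T1.ncard = k
  cardS2 : S2.ncard = k
  cardT2 : T2.ncard = k
  distinct : ∀ i j : Fin 4, i ≠ j → Disjoint (![S1, T1, S2, T2] i) (![S1, T1, S2, T2] j)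
  Rne : ∀ i, R i ≠ []
  Rnd : ∀ i, (R i).Nodup
  Rdisj : ∀ i j, i ≠ j → ∀ v, v ∈ R i → v ∉ R j
  Rheads : S1 = {v | ∃ i, (R i).head? = some v}
  Rlasts : T1 = {v | ∃ i, (R i).getLast? = some v}
  Bne : ∀ i, B i ≠ []
  Bnd : ∀ i, (B i).Nodup
  Bdisj : ∀ i j, i ≠ j → ∀ v, v ∈ B i → v ∉ B j
  Bheads : S2 = {v | ∃ i, (B i).head? = some v}
  Blasts : T2 = {v | ∃ i, (B i).getLast? = some v}
  /-- no edge is both red and blue -/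
  edgeDisj : ∀ u v, (pathRel R u v ∨ pathRel R v u) → ¬ (pathRel B u v ∨ pathRel B v u)
  /-- terminals have degree 1 in `H` -/
  degOne : ∀ t ∈ S1 ∪ T1 ∪ S2 ∪ T2, ∃! v, undirAdj R B t v
  /-- every non-terminal vertex lies on a red path and on a blue path -/
  cover : ∀ v, v ∉ S1 ∪ T1 ∪ S2 ∪ T2 → (∃ i, v ∈ R i) ∧ (∃ j, v ∈ B j)
  /-- `R` is the unique set of `k` disjoint paths of `H` routing `(S1,T1)` -/
  Runiq : ∀ R' : Fin k → List V,
    (∀ i, R' i ≠ [] ∧ (R' i).Nodup ∧ (R' i).Chain' (undirAdj R B)) →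
    (∀ i j, i ≠ j → ∀ v, v ∈ R' i → v ∉ R' j) →
    S1 = {v | ∃ i, (R' i).head? = some v} →
    T1 = {v | ∃ i, (R' i).getLast? = some v} →
    ∀ l, (∃ i, R' i = l) ↔ (∃ i, R i = l)
  /-- `B` is the unique set of `k` disjoint paths of `H` routing `(S2,T2)` -/
  Buniq : ∀ B' : Fin k → List V,
    (∀ i, B' i ≠ [] ∧ (B' i).Nodup ∧ (B' i).Chain' (undirAdj R B)) →
    (∀ i j, i ≠ j → ∀ v, v ∈ B' i → v ∉ B' j) →
    S2 = {v | ∃ i, (B' i).head? = some v} →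
    T2 = {v | ∃ i, (B' i).getLast? = some v} →
    ∀ l, (∃ i, B' i = l) ↔ (∃ i, B i = l)

/-- A "blue cycle" in the directed graph with edge relations `red`, `blue`: a simple
directed cycle consisting of an alternation of single red edges and nonempty all-blue
directed subpaths (equivalently: a simple directed cycle all of whose edges are red or
blue, containing at least one red edge, and with no two consecutive red edges). -/
def BlueCycle {V : Type} (red blue : V → V → Prop) : Prop :=
  ∃ (m : ℕ) (f : ZMod m → V), 2 ≤ m ∧ Function.Injective f ∧
    (∀ i : ZMod m, red (f i) (f (i + 1)) ∨ blue (f i) (f (i + 1))) ∧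
    (∃ i : ZMod m, red (f i) (f (i + 1))) ∧
    (∀ i : ZMod m, ¬ (red (f i) (f (i + 1)) ∧ red (f (i + 1)) (f (i + 2))))

/-- A red cycle is a blue cycle with the roles of the colors exchanged. -/
def RedCycle {V : Type} (red blue : V → V → Prop) : Prop :=
  BlueCycle blue red

/-!
Let `f` be a blue cycle. Delete its blue edges from the blue paths and reverse its red edges.
Since no two red edges of the cycle are consecutive, the edge entering the tail of a red edge is
blue and gets deleted, so every vertex keeps at most one incoming edge and the sources `S2` get
none. Following the new edges from the sources therefore gives vertex-disjoint paths. Such a path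
can only stop in `T2`: a vertex whose blue out-edge was deleted either is the head of a red edge,
and continues backwards along it, or lost its blue in-edge as well and is never reached. By
counting, these paths end at all of `T2`, so they route `(S2, T2)`; but they avoid the blue edge
that follows a red edge of the cycle, contradicting the uniqueness of `B`.
-/

open Relation Function

namespace List

variable {α : Type*} {l : List α} {a b c : α}

theorem infix_pair_iff_getElem? :
    [a, b] <:+: l ↔ ∃ n, l[n]? = some a ∧ l[n + 1]? = some b := by
  rw [infix_iff_getElem?]
  constructor
  · rintro ⟨n, -, h⟩
    exact ⟨n, by simpa using h 0 (by simp), by simpa [add_comm] using h 1 (by simp)⟩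
  · rintro ⟨n, ha, hb⟩
    refine ⟨n, ?_, fun i hi => ?_⟩
    · have := (getElem?_eq_some_iff.mp hb).1
      simp only [length_cons, length_nil]
      omega
    · simp only [length_cons, length_nil] at hi
      interval_cases i <;> simpa [add_comm]

theorem Nodup.eq_of_infix_pair (hl : l.Nodup) (h₁ : [a, c] <:+: l) (h₂ : [b, c] <:+: l) :
    a = b := by
  obtain ⟨n₁, ha, hc₁⟩ := infix_pair_iff_getElem?.mp h₁
  obtain ⟨n₂, hb, hc₂⟩ := infix_pair_iff_getElem?.mp h₂
  have hlt : n₁ + 1 < l.length := (getElem?_eq_some_iff.mp hc₁).1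
  have : n₁ + 1 = n₂ + 1 := (getElem?_inj hlt hl).mp (hc₁.trans hc₂.symm)
  rw [show n₂ = n₁ by omega] at hb
  exact Option.some_injective _ (ha.symm.trans hb)

theorem Nodup.not_infix_pair_of_head? (hl : l.Nodup) (hc : l.head? = some c) :
    ¬ [a, c] <:+: l := by
  intro h
  obtain ⟨n, -, hn⟩ := infix_pair_iff_getElem?.mp h
  rw [head?_eq_getElem?] at hc
  have hlt : 0 < l.length := (getElem?_eq_some_iff.mp hc).1
  exact absurd ((getElem?_inj hlt hl).mp (hc.trans hn.symm)) (by omega)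

theorem exists_infix_pair_of_mem (h : a ∈ l) (ha : l.getLast? ≠ some a) :
    ∃ b, [a, b] <:+: l := by
  obtain ⟨n, hn⟩ := mem_iff_getElem?.mp h
  have hlt : n < l.length := (getElem?_eq_some_iff.mp hn).1
  have hsucc : n + 1 < l.length := by
    by_contra hge
    exact ha (by rw [getLast?_eq_getElem?, show l.length - 1 = n by omega, hn])
  exact ⟨l[n + 1], infix_pair_iff_getElem?.mpr ⟨n, hn, getElem?_eq_getElem hsucc⟩⟩

end List

section RelOrbit

variable {α : Type*} {r : α → α → Prop} {n : ℕ} {x a : α}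

variable (r) in
open Classical in
noncomputable def relOrbit : ℕ → α → List α
  | 0, x => [x]
  | n + 1, x => if h : ∃ y, r x y then x :: relOrbit n h.choose else [x]

theorem relOrbit_succ_of_not_exists (h : ¬ ∃ y, r x y) : relOrbit r (n + 1) x = [x] := by
  rw [relOrbit, dif_neg h]

theorem relOrbit_succ_of_exists (h : ∃ y, r x y) :
    relOrbit r (n + 1) x = x :: relOrbit r n h.choose := by
  rw [relOrbit, dif_pos h]

theorem relOrbit_ne_nil : relOrbit r n x ≠ [] := by
  cases n with
  | zero => simp [relOrbit]
  | succ n =>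
    by_cases h : ∃ y, r x y
    · simp [relOrbit_succ_of_exists h]
    · simp [relOrbit_succ_of_not_exists h]

theorem head?_relOrbit : (relOrbit r n x).head? = some x := by
  cases n with
  | zero => simp [relOrbit]
  | succ n =>
    by_cases h : ∃ y, r x y
    · simp [relOrbit_succ_of_exists h]
    · simp [relOrbit_succ_of_not_exists h]

theorem isChain_relOrbit : (relOrbit r n x).IsChain r := by
  induction n generalizing x with
  | zero => simp [relOrbit]
  | succ n ih =>
    by_cases h : ∃ y, r x y
    · rw [relOrbit_succ_of_exists h, List.isChain_cons, head?_relOrbit]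
      exact ⟨fun y hy => Option.some_inj.mp hy ▸ h.choose_spec, ih⟩
    · simp [relOrbit_succ_of_not_exists h]

theorem reflTransGen_of_mem_relOrbit (ha : a ∈ relOrbit r n x) : ReflTransGen r x a := by
  induction n generalizing x with
  | zero =>
    rw [relOrbit, List.mem_singleton] at ha
    exact ha ▸ .refl
  | succ n ih =>
    by_cases h : ∃ y, r x y
    · rw [relOrbit_succ_of_exists h, List.mem_cons] at ha
      rcases ha with rfl | ha
      · rfl
      · exact ReflTransGen.head h.choose_spec (ih ha)
    · rw [relOrbit_succ_of_not_exists h, List.mem_singleton] at ha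
      exact ha ▸ .refl

theorem length_relOrbit_of_exists_rel_getLast
    (h : ∃ y, r ((relOrbit r n x).getLast relOrbit_ne_nil) y) :
    (relOrbit r n x).length = n + 1 := by
  induction n generalizing x with
  | zero => simp [relOrbit]
  | succ n ih =>
    by_cases hx : ∃ y, r x y
    · simp only [relOrbit_succ_of_exists hx, List.length_cons, add_left_inj]
      simp only [relOrbit_succ_of_exists hx, List.getLast_cons relOrbit_ne_nil] at h
      exact ih h
    · simp [relOrbit_succ_of_not_exists hx] at h
      exact absurd h hx

theorem nodup_relOrbit (hx : ∀ a, ReflTransGen r x a → ¬ TransGen r a a) :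
    (relOrbit r n x).Nodup := by
  induction n generalizing x with
  | zero => simp [relOrbit]
  | succ n ih =>
    by_cases h : ∃ y, r x y
    · rw [relOrbit_succ_of_exists h, List.nodup_cons]
      refine ⟨fun hmem => hx x .refl ?_, ih fun a ha => hx a (.head h.choose_spec ha)⟩
      exact TransGen.head' h.choose_spec (reflTransGen_of_mem_relOrbit hmem)
    · simp [relOrbit_succ_of_not_exists h]

theorem not_exists_rel_getLast_relOrbit [Fintype α]
    (hx : ∀ a, ReflTransGen r x a → ¬ TransGen r a a) :
    ¬ ∃ y, r ((relOrbit r (Fintype.card α) x).getLast relOrbit_ne_nil) y := fun h => by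
  have := (nodup_relOrbit (n := Fintype.card α) hx).length_le_card
  rw [length_relOrbit_of_exists_rel_getLast h] at this
  omega

theorem Relation.ReflTransGen.eq_of_forall_not_rel (h : ReflTransGen r a x) (hx : ∀ w, ¬ r w x) :
    a = x := by
  rcases h.cases_tail with rfl | ⟨w, -, hw⟩
  · rfl
  · exact absurd hw (hx w)

section LeftUnique

variable (hr : Relator.LeftUnique r) (hx : ∀ w, ¬ r w x)
include hr hx

-- The first vertex to be repeated would have two predecessors.
theorem not_transGen_self_of_reflTransGen (ha : ReflTransGen r x a) : ¬ TransGen r a a := by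
  induction ha with
  | refl =>
    intro hxx
    obtain ⟨w, -, hw⟩ := TransGen.tail'_iff.mp hxx
    exact hx w hw
  | tail _ hbc ih =>
    intro hcc
    obtain ⟨d, hcd, hdc⟩ := TransGen.tail'_iff.mp hcc
    cases hr hdc hbc
    exact ih (TransGen.head' hbc hcd)

theorem eq_of_reflTransGen_of_reflTransGen {y : α} (hy : ∀ w, ¬ r w y)
    (hxa : ReflTransGen r x a) (hya : ReflTransGen r y a) : x = y := by
  rcases ReflTransGen.total_of_right_unique hr.flip (reflTransGen_swap.mpr hxa)
      (reflTransGen_swap.mpr hya) with h | h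
  · exact (reflTransGen_swap.mp h : ReflTransGen r y x).eq_of_forall_not_rel hx |>.symm
  · exact (reflTransGen_swap.mp h : ReflTransGen r x y).eq_of_forall_not_rel hy

end LeftUnique

end RelOrbit

section PathRel

variable {V : Type} {k : ℕ} {P : Fin k → List V} {u v : V}

theorem pathRel_leftUnique (hnd : ∀ i, (P i).Nodup)
    (hdisj : ∀ i j, i ≠ j → ∀ v, v ∈ P i → v ∉ P j) : Relator.LeftUnique (pathRel P) := by
  rintro u w v ⟨i, hi⟩ ⟨j, hj⟩
  obtain rfl : i = j := by
    by_contra hij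
    exact hdisj i j hij v (hi.mem (by simp)) (hj.mem (by simp))
  exact (hnd i).eq_of_infix_pair hi hj

theorem not_pathRel_of_head? (hnd : ∀ i, (P i).Nodup)
    (hdisj : ∀ i j, i ≠ j → ∀ v, v ∈ P i → v ∉ P j) {j : Fin k} (hv : (P j).head? = some v) :
    ¬ pathRel P u v := by
  rintro ⟨i, hi⟩
  obtain rfl : i = j := by
    by_contra hij
    exact hdisj i j hij v (hi.mem (by simp)) (List.mem_of_mem_head? hv)
  exact (hnd i).not_infix_pair_of_head? hv hi

theorem exists_pathRel_of_mem {j : Fin k} (hv : v ∈ P j) (hlast : (P j).getLast? ≠ some v) :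
    ∃ w, pathRel P v w :=
  (List.exists_infix_pair_of_mem hv hlast).imp fun _ h => ⟨j, h⟩

theorem mem_of_pathRel_right (h : pathRel P u v) : ∃ j, v ∈ P j :=
  h.imp fun _ hj => hj.mem (by simp)

end PathRel

namespace TwoCommodity

variable {V : Type} {k : ℕ} (C : TwoCommodity V k) {s u v : V}

theorem pathRel_B_leftUnique : Relator.LeftUnique (pathRel C.B) :=
  pathRel_leftUnique C.Bnd C.Bdisj

variable {C}

theorem not_pathRel_B_of_mem_S2 (hs : s ∈ C.S2) : ¬ pathRel C.B u s := by
  rw [C.Bheads] at hs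
  obtain ⟨j, hj⟩ := hs
  exact not_pathRel_of_head? C.Bnd C.Bdisj hj

theorem exists_pathRel_B_of_not_mem_T2 {j : Fin k} (hv : v ∈ C.B j) (hT : v ∉ C.T2) :
    ∃ w, pathRel C.B v w :=
  exists_pathRel_of_mem hv fun h => hT (C.Blasts ▸ ⟨j, h⟩)

theorem head_B_mem_S2 (j : Fin k) : (C.B j).head (C.Bne j) ∈ C.S2 :=
  C.Bheads ▸ ⟨j, List.head?_eq_some_head _⟩

theorem head_B_injective : Injective fun j => (C.B j).head (C.Bne j) := by
  intro i j (hij : (C.B i).head _ = (C.B j).head _)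
  by_contra hne
  exact C.Bdisj i j hne _ (List.head_mem _) (hij ▸ List.head_mem (C.Bne j))

end TwoCommodity

section Reroute

variable {V : Type} {k m : ℕ}

def reroute (C : TwoCommodity V k) (f : ZMod m → V) (a b : V) : Prop :=
  (∃ i, pathRel C.R (f i) (f (i + 1)) ∧ a = f (i + 1) ∧ b = f i) ∨
  (pathRel C.B a b ∧ ∀ i, ¬ (f i = a ∧ f (i + 1) = b))

variable {C : TwoCommodity V k} {f : ZMod m → V} {i : ZMod m} {a b : V}

theorem undirAdj_of_reroute (h : reroute C f a b) : undirAdj C.R C.B a b := by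
  rcases h with ⟨i, hi, rfl, rfl⟩ | ⟨hb, -⟩
  · exact Or.inr (Or.inl hi)
  · exact Or.inr (Or.inr (Or.inl hb))

section Cycle

variable (hinj : Injective f)
  (hcol : ∀ i, pathRel C.R (f i) (f (i + 1)) ∨ pathRel C.B (f i) (f (i + 1)))
  (hno : ∀ i, ¬ (pathRel C.R (f i) (f (i + 1)) ∧ pathRel C.R (f (i + 1)) (f (i + 2))))

include hcol hno in
theorem pathRel_B_pred_of_pathRel_R (hred : pathRel C.R (f i) (f (i + 1))) :
    pathRel C.B (f (i - 1)) (f i) := by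
  have hblue := (hcol (i - 1)).resolve_left fun h => hno (i - 1) ⟨h, by
    rwa [sub_add_cancel, show i - 1 + 2 = i + 1 by ring]⟩
  rwa [sub_add_cancel] at hblue

include hinj hcol hno in
theorem eq_of_reroute_of_pathRel_R (hred : pathRel C.R (f i) (f (i + 1)))
    (h : reroute C f a (f i)) : a = f (i + 1) := by
  rcases h with ⟨j, -, rfl, hij⟩ | ⟨ha, hna⟩
  · rw [hinj hij]
  · have := C.pathRel_B_leftUnique ha (pathRel_B_pred_of_pathRel_R hcol hno hred)
    exact absurd ⟨this.symm, by rw [sub_add_cancel]⟩ (hna (i - 1))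

include hinj hcol hno in
theorem reroute_leftUnique : Relator.LeftUnique (reroute C f) := by
  intro a b c ha hb
  rcases ha with ⟨i, hi, rfl, rfl⟩ | ha
  · exact (eq_of_reroute_of_pathRel_R hinj hcol hno hi hb).symm
  rcases hb with ⟨j, hj, rfl, rfl⟩ | ⟨hb, -⟩
  · exact eq_of_reroute_of_pathRel_R hinj hcol hno hj (Or.inr ha)
  · exact C.pathRel_B_leftUnique ha.1 hb

include hcol hno in
theorem not_reroute_of_mem_S2 {s : V} (hs : s ∈ C.S2) : ¬ reroute C f a s := by
  rintro (⟨i, hi, -, rfl⟩ | ⟨ha, -⟩)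
  · exact TwoCommodity.not_pathRel_B_of_mem_S2 hs (pathRel_B_pred_of_pathRel_R hcol hno hi)
  · exact TwoCommodity.not_pathRel_B_of_mem_S2 hs ha

include hinj hcol hno in
theorem mem_T2_of_reroute_maximal {s z : V} (hs : s ∈ C.S2) (hz : ReflTransGen (reroute C f) s z)
    (hmax : ∀ v, ¬ reroute C f z v) : z ∈ C.T2 := by
  by_contra hzT
  have hzB : ∃ j, z ∈ C.B j := by
    rcases hz.cases_tail with rfl | ⟨w, -, ⟨i, hi, -, rfl⟩ | ⟨hw, -⟩⟩
    · rw [C.Bheads] at hs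
      exact hs.imp fun _ => List.mem_of_mem_head?
    · exact mem_of_pathRel_right (pathRel_B_pred_of_pathRel_R hcol hno hi)
    · exact mem_of_pathRel_right hw
  obtain ⟨j, hj⟩ := hzB
  obtain ⟨v, hv⟩ := TwoCommodity.exists_pathRel_B_of_not_mem_T2 hj hzT
  -- The blue edge leaving `z` must lie on the cycle, so the cycle enters `z` by a blue edge too.
  obtain ⟨i, rfl, rfl⟩ : ∃ i, f i = z ∧ f (i + 1) = v := by
    by_contra h
    exact hmax v (Or.inr ⟨hv, fun i hi => h ⟨i, hi⟩⟩)
  have hnred : ¬ pathRel C.R (f (i - 1)) (f i) := fun hr =>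
    hmax (f (i - 1)) (Or.inl ⟨i - 1, by rwa [sub_add_cancel], by rw [sub_add_cancel], rfl⟩)
  have hpred : pathRel C.B (f (i - 1)) (f i) := by
    simpa using (hcol (i - 1)).resolve_left (by rwa [sub_add_cancel])
  rcases hz.cases_tail with rfl | ⟨w, -, ⟨i', hi', -, hii'⟩ | ⟨hw, hnw⟩⟩
  · exact TwoCommodity.not_pathRel_B_of_mem_S2 hs hpred
  · rw [hinj hii'] at hv
    exact C.edgeDisj _ _ (Or.inl hi') (Or.inl hv)
  · exact hnw (i - 1) ⟨(C.pathRel_B_leftUnique hw hpred).symm, by rw [sub_add_cancel]⟩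

include hinj hcol hno in
theorem not_transGen_self_of_mem_S2 {s a : V} (hs : s ∈ C.S2)
    (ha : ReflTransGen (reroute C f) s a) : ¬ TransGen (reroute C f) a a :=
  not_transGen_self_of_reflTransGen (reroute_leftUnique hinj hcol hno)
    (fun _ => not_reroute_of_mem_S2 hcol hno hs) ha

variable [Fintype V]

variable (C f) in
noncomputable def reroutedPaths (j : Fin k) : List V :=
  relOrbit (reroute C f) (Fintype.card V) ((C.B j).head (C.Bne j))

theorem reroutedPaths_ne_nil (j : Fin k) : reroutedPaths C f j ≠ [] :=
  relOrbit_ne_nil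

include hinj hcol hno in
theorem reroutedPaths_disjoint {i j : Fin k} (hij : i ≠ j) {v : V}
    (hi : v ∈ reroutedPaths C f i) : v ∉ reroutedPaths C f j := fun hj =>
  hij <| C.head_B_injective <| eq_of_reflTransGen_of_reflTransGen
    (reroute_leftUnique hinj hcol hno) (fun _ => not_reroute_of_mem_S2 hcol hno (C.head_B_mem_S2 i))
    (fun _ => not_reroute_of_mem_S2 hcol hno (C.head_B_mem_S2 j))
    (reflTransGen_of_mem_relOrbit hi) (reflTransGen_of_mem_relOrbit hj)

include hinj hcol hno in
theorem range_getLast_reroutedPaths :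
    Set.range (fun j => (reroutedPaths C f j).getLast (reroutedPaths_ne_nil j)) = C.T2 := by
  have hlast (j : Fin k) : (reroutedPaths C f j).getLast (reroutedPaths_ne_nil j) ∈ C.T2 :=
    mem_T2_of_reroute_maximal hinj hcol hno (C.head_B_mem_S2 j)
      (reflTransGen_of_mem_relOrbit (List.getLast_mem _)) fun v hv =>
        not_exists_rel_getLast_relOrbit
          (fun _ => not_transGen_self_of_mem_S2 hinj hcol hno (C.head_B_mem_S2 j)) ⟨v, hv⟩
  have hinj' : Injective fun j => (reroutedPaths C f j).getLast (reroutedPaths_ne_nil j) :=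
    fun i j (hij : List.getLast _ _ = List.getLast _ _) => by_contra fun hne =>
      reroutedPaths_disjoint hinj hcol hno hne (List.getLast_mem _)
        (hij ▸ List.getLast_mem (reroutedPaths_ne_nil j))
  exact Set.eq_of_subset_of_ncard_le (Set.range_subset_iff.mpr hlast)
    (by rw [C.cardT2, Set.ncard_range_of_injective hinj', Nat.card_fin]) (Set.toFinite _)

include hinj hcol hno in
theorem exists_reroutedPaths_eq (j : Fin k) : ∃ j', reroutedPaths C f j' = C.B j := by
  refine (C.Buniq (reroutedPaths C f) (fun i => ⟨reroutedPaths_ne_nil i, ?_, ?_⟩)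
    (fun _ _ hij _ => reroutedPaths_disjoint hinj hcol hno hij) ?_ ?_ (C.B j)).mpr ⟨j, rfl⟩
  · exact nodup_relOrbit fun _ => not_transGen_self_of_mem_S2 hinj hcol hno (C.head_B_mem_S2 i)
  · exact isChain_relOrbit.imp fun _ _ => undirAdj_of_reroute
  · simp only [C.Bheads, reroutedPaths, head?_relOrbit, fun i => List.head?_eq_some_head (C.Bne i),
      Option.some_inj]
  · simp [← range_getLast_reroutedPaths hinj hcol hno,
      List.getLast?_eq_some_getLast (reroutedPaths_ne_nil _), Set.range, eq_comm]

end Cycle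

end Reroute

theorem stmt4_general {V : Type} [Fintype V] {k : ℕ} (C : TwoCommodity V k) :
    ¬ BlueCycle (pathRel C.R) (pathRel C.B) := by
  rintro ⟨m, f, -, hinj, hcol, ⟨i, hred⟩, hno⟩
  have hblue : pathRel C.B (f (i + 1)) (f (i + 1 + 1)) :=
    (hcol (i + 1)).resolve_left fun h => hno i ⟨hred, by rwa [add_assoc, one_add_one_eq_two] at h⟩
  obtain ⟨j, hj⟩ := hblue
  obtain ⟨j', hj'⟩ := exists_reroutedPaths_eq hinj hcol hno j
  -- By uniqueness of `B`, the blue edge leaving the red edge `i` is also a rerouted edge.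
  have hre : reroute C f (f (i + 1)) (f (i + 1 + 1)) :=
    List.isChain_pair.mp (isChain_relOrbit.infix (hj' ▸ hj))
  rcases hre with ⟨i', -, hi', hii'⟩ | ⟨-, hoff⟩
  · obtain rfl : i = i' := add_right_cancel (hinj hi')
    rw [hii'] at hj
    exact C.edgeDisj _ _ (Or.inl hred) (Or.inr ⟨j, hj⟩)
  · exact hoff (i + 1) ⟨rfl, rfl⟩

/-- In the minimal two-commodity routing graph, the oriented graph `H̃` contains no
blue cycle. -/
theorem stmt4 {V : Type} [Fintype V] {k : ℕ} (hk : 0 < k) (C : TwoCommodity V k) :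
    ¬ BlueCycle (pathRel C.R) (pathRel C.B) :=
  stmt4_general C
end

section
/- Under the setup of the minimal two-commodity routing graph H (red paths R routing (S1,T1), blue paths B routing (S2,T2), each of size k, uniqueness and edge/vertex properties as stated), define a chain to be a directed path in the oriented graph H̃ whose edges alternate between red and blue. If H̃ contains no red cycle and no blue cycle, then every vertex of H appears at most once on any chain, i.e., every chain is a simple path. -/
/-- A chain: a directed (not necessarily simple) path in `H̃` whose edges alternate
between red and blue. -/
def IsChainWalk {V : Type} (red blue : V → V → Prop) (l : List V) : Prop :=
  l.Chain' (fun u v => red u v ∨ blue u v) ∧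
  ∀ u v w : V, [u, v, w] <:+: l → ((red u v ∧ blue v w) ∨ (blue u v ∧ red v w))

/-! A repeated vertex on a chain yields a closed subwalk `v, c₁, …, cₖ, v` of it with
`v, c₁, …, cₖ` distinct. Around this cycle the colours alternate everywhere except possibly at
`v`, where the walk closes up. If both edges at `v` are red, no two consecutive edges are blue
and the cycle is a red cycle; otherwise no two consecutive edges are red and it is a blue
cycle. -/

theorem List.exists_cons_append_infix_of_not_nodup {α : Type*} :
    ∀ {l : List α}, ¬ l.Nodup → ∃ v c, (v :: c).Nodup ∧ v :: c ++ [v] <:+: l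
  | [] => by simp
  | x :: t => by
    intro h
    by_cases ht : t.Nodup
    · have hx : x ∈ t := by simpa [ht] using h
      obtain ⟨s, r, rfl⟩ := List.append_of_mem hx
      refine ⟨x, s, ?_, [], r, by simp⟩
      simp only [List.nodup_append, List.nodup_cons] at ht ⊢
      exact ⟨fun hs => ht.2.2 x hs x (by simp) rfl, ht.1⟩
    · obtain ⟨v, c, hnd, hinf⟩ := exists_cons_append_infix_of_not_nodup ht
      exact ⟨v, c, hnd, hinf.trans (List.suffix_cons x t).isInfix⟩

theorem List.getElem_triple_infix {α : Type*} (l : List α) (n : ℕ) (h : n + 2 < l.length) :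
    [l[n], l[n + 1], l[n + 2]] <:+: l := by
  refine ⟨l.take n, l.drop (n + 3), ?_⟩
  have hdrop : l.drop n = l[n] :: l[n + 1] :: l[n + 2] :: l.drop (n + 3) := by
    rw [List.drop_eq_getElem_cons (by omega), List.drop_eq_getElem_cons (by omega),
      List.drop_eq_getElem_cons h]
  calc l.take n ++ [l[n], l[n + 1], l[n + 2]] ++ l.drop (n + 3) = l.take n ++ l.drop n := by
        rw [hdrop, List.append_assoc]; rfl
    _ = l := l.take_append_drop n

theorem pathRel_irrefl {V : Type} {k : ℕ} {P : Fin k → List V} {v : V} (hP : ∀ i, (P i).Nodup) :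
    ¬ pathRel P v v := by
  rintro ⟨i, hi⟩
  simpa using (hP i).sublist hi.sublist

section Cycles

variable {V : Type} {red blue : V → V → Prop}

theorem blueCycle_of_alternating_except {m : ℕ} (hm : 2 ≤ m) {f : ZMod m → V}
    (hf : Function.Injective f) (hdisj : ∀ u v, red u v → ¬ blue u v)
    (hedge : ∀ i, red (f i) (f (i + 1)) ∨ blue (f i) (f (i + 1))) (i₀ : ZMod m)
    (halt : ∀ i ≠ i₀, (red (f i) (f (i + 1)) ∧ blue (f (i + 1)) (f (i + 2))) ∨
      (blue (f i) (f (i + 1)) ∧ red (f (i + 1)) (f (i + 2))))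
    (hwrap : ¬ (red (f i₀) (f (i₀ + 1)) ∧ red (f (i₀ + 1)) (f (i₀ + 2)))) :
    BlueCycle red blue := by
  refine ⟨m, f, hm, hf, hedge, ?_, fun i ⟨hr₁, hr₂⟩ => ?_⟩
  · have : Fact (1 < m) := ⟨hm⟩
    rcases halt (i₀ + 1) (by simp) with ⟨hr, -⟩ | ⟨-, hr⟩
    · exact ⟨_, hr⟩
    · rw [show i₀ + 1 + 2 = i₀ + 1 + 1 + 1 by ring] at hr
      exact ⟨_, hr⟩
  · by_cases hi : i = i₀
    · exact hwrap (hi ▸ ⟨hr₁, hr₂⟩)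
    · rcases halt i hi with ⟨-, hb⟩ | ⟨hb, -⟩
      exacts [hdisj _ _ hr₂ hb, hdisj _ _ hr₁ hb]

theorem blueCycle_or_redCycle_of_alternating_off {m : ℕ} (hm : 2 ≤ m) {f : ZMod m → V}
    (hf : Function.Injective f) (hdisj : ∀ u v, red u v → ¬ blue u v)
    (hedge : ∀ i, red (f i) (f (i + 1)) ∨ blue (f i) (f (i + 1))) (i₀ : ZMod m)
    (halt : ∀ i ≠ i₀, (red (f i) (f (i + 1)) ∧ blue (f (i + 1)) (f (i + 2))) ∨
      (blue (f i) (f (i + 1)) ∧ red (f (i + 1)) (f (i + 2)))) :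
    BlueCycle red blue ∨ RedCycle red blue := by
  by_cases hwrap : red (f i₀) (f (i₀ + 1)) ∧ red (f (i₀ + 1)) (f (i₀ + 2))
  · refine .inr <| blueCycle_of_alternating_except hm hf (fun u v hb hr => hdisj u v hr hb)
      (fun i => (hedge i).symm) i₀ (fun i hi => (halt i hi).symm) ?_
    exact fun ⟨hb, _⟩ => hdisj _ _ hwrap.1 hb
  · exact .inl (blueCycle_of_alternating_except hm hf hdisj hedge i₀ halt hwrap)

theorem IsChainWalk.infix {l l' : List V} (hl : IsChainWalk red blue l) (h : l' <:+: l) :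
    IsChainWalk red blue l' :=
  ⟨hl.1.infix h, fun u v w huvw => hl.2 u v w (huvw.trans h)⟩

theorem IsChainWalk.alternates {l : List V} (hl : IsChainWalk red blue l) (n : ℕ)
    (h : n + 2 < l.length) :
    (red l[n] l[n + 1] ∧ blue l[n + 1] l[n + 2]) ∨
      (blue l[n] l[n + 1] ∧ red l[n + 1] l[n + 2]) :=
  hl.2 _ _ _ (l.getElem_triple_infix n h)

theorem IsChainWalk.blueCycle_or_redCycle_of_closed (hdisj : ∀ u v, red u v → ¬ blue u v)
    (hred : ∀ v, ¬ red v v) (hblue : ∀ v, ¬ blue v v) {v : V} {c : List V}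
    (hnd : (v :: c).Nodup) (hw : IsChainWalk red blue (v :: c ++ [v])) :
    BlueCycle red blue ∨ RedCycle red blue := by
  have hm : 2 ≤ c.length + 1 := by
    rcases c with _ | ⟨x, c⟩
    · have hloop := List.isChain_pair.mp hw.1
      exact (hloop.elim (hred v) (hblue v)).elim
    · simp
  -- `f` runs once around the cycle; colours may fail to alternate only at `v = f 0`, i.e. at `-1`
  let f : ZMod (c.length + 1) → V := fun i => (v :: c)[i.val]'(ZMod.val_lt i)
  have hfw : ∀ n (h : n < (v :: c ++ [v]).length), f n = (v :: c ++ [v])[n] := by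
    intro n h
    rw [List.length_append, List.length_cons, List.length_singleton] at h
    rcases Nat.lt_or_ge n (c.length + 1) with hn | hn
    · simp only [f, ZMod.val_natCast, Nat.mod_eq_of_lt hn]
      exact (List.getElem_append_left hn).symm
    · obtain rfl : n = c.length + 1 := by omega
      simp [f]
  refine blueCycle_or_redCycle_of_alternating_off hm (f := f) ?_ hdisj (fun i => ?_) (-1)
    fun i hi => ?_
  · intro i j hij
    exact ZMod.val_injective _ ((hnd.getElem_inj_iff).mp hij)
  · obtain ⟨n, hn, rfl⟩ : ∃ n < c.length + 1, (n : ZMod _) = i :=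
      ⟨i.val, ZMod.val_lt i, ZMod.natCast_zmod_val i⟩
    rw [← Nat.cast_succ, hfw, hfw]
    exact List.isChain_iff_getElem.mp hw.1 n (by simp; omega)
  · obtain ⟨n, hn, rfl⟩ : ∃ n < c.length + 1, (n : ZMod _) = i :=
      ⟨i.val, ZMod.val_lt i, ZMod.natCast_zmod_val i⟩
    have hn' : n ≠ c.length := by
      rintro rfl
      exact hi (eq_neg_of_add_eq_zero_left (by exact_mod_cast ZMod.natCast_self _))
    rw [← Nat.cast_succ, ← Nat.cast_ofNat (R := ZMod (c.length + 1)) (n := 2), ← Nat.cast_add,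
      hfw, hfw, hfw]
    exact hw.alternates n (by simp; omega)

theorem IsChainWalk.nodup (hdisj : ∀ u v, red u v → ¬ blue u v) (hred : ∀ v, ¬ red v v)
    (hblue : ∀ v, ¬ blue v v) (hnoblue : ¬ BlueCycle red blue) (hnored : ¬ RedCycle red blue)
    {l : List V} (hl : IsChainWalk red blue l) : l.Nodup := by
  by_contra h
  obtain ⟨v, c, hnd, hinf⟩ := List.exists_cons_append_infix_of_not_nodup h
  rcases (hl.infix hinf).blueCycle_or_redCycle_of_closed hdisj hred hblue hnd with h | h
  exacts [hnoblue h, hnored h]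

end Cycles

theorem stmt5_general {V : Type} {k : ℕ} (C : TwoCommodity V k)
    (hnoblue : ¬ BlueCycle (pathRel C.R) (pathRel C.B))
    (hnored : ¬ RedCycle (pathRel C.R) (pathRel C.B))
    (l : List V) (hl : IsChainWalk (pathRel C.R) (pathRel C.B) l) :
    l.Nodup :=
  hl.nodup (fun u v hr hb => C.edgeDisj u v (.inl hr) (.inl hb)) (fun _ => pathRel_irrefl C.Rnd)
    (fun _ => pathRel_irrefl C.Bnd) hnoblue hnored

/-- If `H̃` contains no red cycle and no blue cycle, then every chain is a simple
path: no vertex appears twice on it. -/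
theorem stmt5 {V : Type} [Fintype V] {k : ℕ} (hk : 0 < k) (C : TwoCommodity V k)
    (hnoblue : ¬ BlueCycle (pathRel C.R) (pathRel C.B))
    (hnored : ¬ RedCycle (pathRel C.R) (pathRel C.B))
    (l : List V) (hl : IsChainWalk (pathRel C.R) (pathRel C.B) l) :
    l.Nodup :=
  stmt5_general C hnoblue hnored l hl
end

section
/- Under the setup of the minimal two-commodity routing graph H with oriented version H̃ (no red or blue cycles exist), let Z be a chain, and let P be a red path or a blue path. If vertices v and v' both lie on Z and on P, and v appears before v' on Z, then v appears before v' on P. -/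
/-- `u` appears (strictly) before `v` on the list `l`. -/
def Before {V : Type} (l : List V) (u v : V) : Prop :=
  ∃ i j : ℕ, i < j ∧ l[i]? = some u ∧ l[j]? = some v

/-!
If `v` comes before `v'` on the chain `Z` but after it on a blue path `P`, then the piece of
`Z` from `v` to `v'` followed by the piece of `P` from `v'` back to `v` is a closed walk in `H̃`
with no two consecutive red edges: `Z` alternates and `P` is all blue. Cutting such a closed
walk at a repeated vertex leaves a shorter one of the same kind, so it eventually becomes a blue
cycle (it has a red edge, since following blue edges only moves forward along the blue paths).
If `v = v'`, the piece of `Z` alone closes up and gives a blue or a red cycle according to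
whether its closing junction is red–red. Red paths are symmetric.
-/

open Function

variable {V : Type}

def HasClosedWalk (rel : V → V → Prop) : Prop :=
  ∃ n, 0 < n ∧ ∃ f : ℕ → V, Periodic f n ∧ ∀ t, rel (f t) (f (t + 1))

theorem irrefl_of_not_hasClosedWalk {rel : V → V → Prop} (h : ¬ HasClosedWalk rel) (x : V) :
    ¬ rel x x :=
  fun hx => h ⟨1, one_pos, fun _ => x, fun _ => rfl, fun _ => hx⟩

theorem not_hasClosedWalk_of_lt {rel : V → V → Prop} (φ : V → ℕ)
    (hφ : ∀ u w, rel u w → φ u < φ w) : ¬ HasClosedWalk rel := by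
  rintro ⟨n, hn, f, hf, hstep⟩
  have hmono : StrictMono (φ ∘ f) := strictMono_nat_of_lt_succ fun t => hφ _ _ (hstep t)
  have hclosed : f n = f 0 := by simpa using hf 0
  exact (hmono hn).ne (by simp [hclosed])

theorem List.idxOf_lt_idxOf_of_infix [DecidableEq V] {l : List V} (hl : l.Nodup) {u w : V}
    (h : [u, w] <:+: l) : l.idxOf u < l.idxOf w := by
  obtain ⟨s, t, rfl⟩ := h
  simp only [List.append_assoc, List.cons_append, List.nil_append] at hl ⊢
  simp only [List.nodup_append, List.nodup_cons, List.mem_cons] at hl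
  have hu : u ∉ s := fun h => hl.2.2 u h u (.inl rfl) rfl
  have hw : w ∉ s := fun h => hl.2.2 w h w (.inr (.inl rfl)) rfl
  have hwu : w ≠ u := fun h => hl.2.1.1 (.inl h.symm)
  rw [List.idxOf_append_of_notMem hu, List.idxOf_append_of_notMem hw,
    List.idxOf_cons_self, List.idxOf_cons_ne _ hwu.symm, List.idxOf_cons_self]
  omega

theorem not_hasClosedWalk_pathRel {k : ℕ} {Q : Fin k → List V} (hnd : ∀ i, (Q i).Nodup)
    (hdisj : ∀ i j, i ≠ j → ∀ v, v ∈ Q i → v ∉ Q j) :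
    ¬ HasClosedWalk (pathRel Q) := by
  classical
  -- the position of a vertex on the unique path through it increases along every edge
  let φ : V → ℕ := fun u => if h : ∃ i, u ∈ Q i then (Q h.choose).idxOf u else 0
  have hφ : ∀ i u, u ∈ Q i → φ u = (Q i).idxOf u := by
    intro i u hu
    have h : ∃ i, u ∈ Q i := ⟨i, hu⟩
    have hi : h.choose = i := by
      by_contra hne
      exact hdisj _ _ hne u h.choose_spec hu
    simp only [φ, dif_pos h, hi]
  refine not_hasClosedWalk_of_lt φ fun u w ⟨i, huw⟩ => ?_
  rw [hφ i u (huw.subset (by simp)), hφ i w (huw.subset (by simp))]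
  exact List.idxOf_lt_idxOf_of_infix (hnd i) huw

/-- A `BlueCycle` in which vertices may repeat, given as an `n`-periodic sequence. -/
structure IsBlueClosedWalk (r b : V → V → Prop) (n : ℕ) (f : ℕ → V) : Prop where
  pos : 0 < n
  periodic : Periodic f n
  step : ∀ t, r (f t) (f (t + 1)) ∨ b (f t) (f (t + 1))
  not_red_red : ∀ t, ¬ (r (f t) (f (t + 1)) ∧ r (f (t + 1)) (f (t + 2)))

theorem Nat.add_one_mod_of_lt {t n : ℕ} (h : t % n + 1 < n) : (t + 1) % n = t % n + 1 := by
  rw [← Nat.mod_add_mod, Nat.mod_eq_of_lt h]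

theorem Nat.add_one_mod_of_eq {t n : ℕ} (h : t % n + 1 = n) : (t + 1) % n = 0 := by
  rw [← Nat.mod_add_mod, h, Nat.mod_self]

theorem apply_add_one_mod {g : ℕ → V} {n : ℕ} (hn : 0 < n) (hclosed : g n = g 0) (t : ℕ) :
    g ((t + 1) % n) = g (t % n + 1) := by
  rcases Nat.lt_or_ge (t % n + 1) n with h | h
  · rw [Nat.add_one_mod_of_lt h]
  · have h : t % n + 1 = n := le_antisymm (Nat.mod_lt t hn) h
    rw [Nat.add_one_mod_of_eq h, h, hclosed]

namespace IsBlueClosedWalk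

variable {r b : V → V → Prop}

theorem of_loop (g : ℕ → V) {n : ℕ} (hn : 0 < n) (hclosed : g n = g 0)
    (hstep : ∀ s < n, r (g s) (g (s + 1)) ∨ b (g s) (g (s + 1)))
    (hsparse : ∀ s, s + 2 ≤ n → ¬ (r (g s) (g (s + 1)) ∧ r (g (s + 1)) (g (s + 2))))
    (hjunction : ¬ (r (g (n - 1)) (g n) ∧ r (g 0) (g 1))) :
    IsBlueClosedWalk r b n (fun t => g (t % n)) where
  pos := hn
  periodic t := by simp
  step t := by
    rw [apply_add_one_mod hn hclosed]
    exact hstep _ (Nat.mod_lt t hn)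
  not_red_red t := by
    simp only [apply_add_one_mod hn hclosed]
    rcases Nat.lt_or_ge (t % n + 1) n with h | h
    · rw [Nat.add_one_mod_of_lt h]
      exact hsparse _ h
    · have h : t % n + 1 = n := le_antisymm (Nat.mod_lt t hn) h
      rw [Nat.add_one_mod_of_eq h, h, show t % n = n - 1 by omega]
      rwa [hclosed] at hjunction ⊢

variable {n : ℕ} {f : ℕ → V}

theorem rotate (h : IsBlueClosedWalk r b n f) (i : ℕ) {d : ℕ} (hd : 0 < d)
    (hclosed : f (i + d) = f i)
    (hjunction : ¬ (r (f (i + (d - 1))) (f (i + d)) ∧ r (f i) (f (i + 1)))) :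
    IsBlueClosedWalk r b d (fun t => f (i + t % d)) :=
  of_loop (fun s => f (i + s)) hd hclosed (fun s _ => h.step (i + s))
    (fun s _ => h.not_red_red (i + s)) hjunction

/-- A repeated vertex splits a closed walk into two shorter closed walks; the junction of
one of them is not red–red because the other's is. -/
theorem exists_shorter (h : IsBlueClosedWalk r b n f) {i j : ℕ} (hij : i < j) (hjn : j < n)
    (heq : f i = f j) : ∃ m < n, ∃ g, IsBlueClosedWalk r b m g := by
  by_cases hjunction : r (f (i + (j - i - 1))) (f (i + (j - i))) ∧ r (f i) (f (i + 1))
  · refine ⟨n - (j - i), by omega, _, h.rotate j (by omega) ?_ ?_⟩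
    · rw [show j + (n - (j - i)) = i + n by omega, h.periodic, heq]
    · rintro ⟨-, hred⟩
      have hnrr := h.not_red_red (i + (j - i - 1))
      rw [show i + (j - i - 1) + 1 = j by omega, show i + (j - i - 1) + 2 = j + 1 by omega] at hnrr
      rw [show i + (j - i) = j by omega] at hjunction
      exact hnrr ⟨hjunction.1, hred⟩
  · exact ⟨j - i, by omega, _, h.rotate i (by omega) (by rw [Nat.add_sub_cancel' hij.le, heq])
      hjunction⟩

theorem blueCycle_of_injOn (h : IsBlueClosedWalk r b n f) (hn : 2 ≤ n)
    (hinj : Set.InjOn f (Set.Iio n)) (hred : ∃ t, r (f t) (f (t + 1))) : BlueCycle r b := by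
  have : NeZero n := ⟨by omega⟩
  have hcast : ∀ t : ℕ, f (t : ZMod n).val = f t := fun t => by
    rw [ZMod.val_natCast, h.periodic.map_mod_nat]
  have hshift : ∀ (i : ZMod n) (k : ℕ), f (i + k).val = f (i.val + k) := fun i k => by
    rw [← hcast (i.val + k)]
    push_cast
    rw [ZMod.natCast_zmod_val]
  have hsucc : ∀ i : ZMod n, f (i + 1).val = f (i.val + 1) := fun i => by
    simpa using hshift i 1
  have hsucc₂ : ∀ i : ZMod n, f (i + 2).val = f (i.val + 2) := fun i => by
    simpa using hshift i 2
  refine ⟨n, fun i => f i.val, hn, fun i j hij => ZMod.val_injective n ?_, fun i => ?_, ?_,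
    fun i => ?_⟩
  · exact hinj (ZMod.val_lt i) (ZMod.val_lt j) hij
  · simpa only [hsucc] using h.step i.val
  · obtain ⟨t, ht⟩ := hred
    refine ⟨t, ?_⟩
    simp only
    rwa [show (t : ZMod n) + 1 = ((t + 1 : ℕ) : ZMod n) by push_cast; rfl, hcast, hcast]
  · simpa only [hsucc, hsucc₂] using h.not_red_red i.val

theorem blueCycle (hr : ∀ x, ¬ r x x) (hb : ¬ HasClosedWalk b) (h : IsBlueClosedWalk r b n f) :
    BlueCycle r b := by
  induction n using Nat.strong_induction_on generalizing f with
  | _ n ih =>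
  by_cases hinj : Set.InjOn f (Set.Iio n)
  · have hred : ∃ t, r (f t) (f (t + 1)) := by
      by_contra! hnone
      exact hb ⟨n, h.pos, f, h.periodic, fun t => (h.step t).resolve_left (hnone t)⟩
    rcases Nat.lt_or_ge n 2 with hn | hn
    · obtain ⟨t, ht⟩ := hred
      obtain rfl : n = 1 := by have := h.pos; omega
      exact (hr _ (by rwa [h.periodic t] at ht)).elim
    · exact h.blueCycle_of_injOn hn hinj hred
  · obtain ⟨i, hi, j, hj, heq, hne⟩ : ∃ i < n, ∃ j < n, f i = f j ∧ i ≠ j := by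
      simpa [Set.InjOn] using hinj
    obtain ⟨m, hm, g, hg⟩ := (lt_or_gt_of_ne hne).elim
      (fun hij => h.exists_shorter hij hj heq) (fun hji => h.exists_shorter hji hi heq.symm)
    exact ih m hm hg

end IsBlueClosedWalk

theorem List.IsChain.rel_getD {R : V → V → Prop} {l : List V} (h : l.IsChain R) (x : V)
    {s : ℕ} (hs : s + 1 < l.length) : R (l.getD s x) (l.getD (s + 1) x) := by
  rw [List.getD_eq_getElem _ _ (by omega), List.getD_eq_getElem _ _ hs]
  exact List.isChain_iff_getElem.mp h s hs

theorem List.getD_triple_infix (l : List V) (x : V) {s : ℕ} (hs : s + 2 < l.length) :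
    [l.getD s x, l.getD (s + 1) x, l.getD (s + 2) x] <:+: l := by
  have hprefix : [l.getD s x, l.getD (s + 1) x, l.getD (s + 2) x] <+: l.drop s := by
    rw [List.drop_eq_getElem_cons (by omega), List.drop_eq_getElem_cons (by omega),
      List.drop_eq_getElem_cons hs, List.getD_eq_getElem _ _ (by omega),
      List.getD_eq_getElem _ _ (by omega), List.getD_eq_getElem _ _ hs]
    exact ⟨_, rfl⟩
  exact hprefix.isInfix.trans (List.drop_suffix s l).isInfix

theorem List.getD_eq_of_getElem?_eq_some {l : List V} {s : ℕ} {u : V} (h : l[s]? = some u)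
    (x : V) : l.getD s x = u := by
  simp [List.getD_eq_getElem?_getD, h]

theorem isChain_pathRel {k : ℕ} (Q : Fin k → List V) (i : Fin k) : (Q i).IsChain (pathRel Q) :=
  (List.isChain_isInfix _).imp fun _ _ h => ⟨i, h⟩

theorem Before.ne {l : List V} {u v : V} (h : Before l u v) (hl : l.Nodup) : u ≠ v := by
  rintro rfl
  obtain ⟨i, j, hij, hi, hj⟩ := h
  exact hij.ne (List.getElem?_inj (List.getElem?_eq_some_iff.mp hi).1 hl |>.mp (hi.trans hj.symm))

theorem before_or_eq_or_before {l : List V} {u v : V} (hu : u ∈ l) (hv : v ∈ l) :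
    Before l u v ∨ u = v ∨ Before l v u := by
  obtain ⟨i, hi, rfl⟩ := List.getElem_of_mem hu
  obtain ⟨j, hj, rfl⟩ := List.getElem_of_mem hv
  rcases lt_trichotomy i j with hij | rfl | hji
  · exact .inl ⟨i, j, hij, List.getElem?_eq_getElem hi, List.getElem?_eq_getElem hj⟩
  · exact .inr (.inl rfl)
  · exact .inr (.inr ⟨j, i, hji, List.getElem?_eq_getElem hj, List.getElem?_eq_getElem hi⟩)

namespace IsChainWalk

variable {red blue : V → V → Prop} {Z : List V}

theorem symm (h : IsChainWalk red blue Z) : IsChainWalk blue red Z :=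
  ⟨h.1.imp fun _ _ => Or.symm, fun u v w huvw => (h.2 u v w huvw).symm⟩

theorem step (h : IsChainWalk red blue Z) (x : V) {s : ℕ} (hs : s + 1 < Z.length) :
    red (Z.getD s x) (Z.getD (s + 1) x) ∨ blue (Z.getD s x) (Z.getD (s + 1) x) :=
  h.1.rel_getD x hs

theorem alternate (h : IsChainWalk red blue Z) (x : V) {s : ℕ} (hs : s + 2 < Z.length) :
    (red (Z.getD s x) (Z.getD (s + 1) x) ∧ blue (Z.getD (s + 1) x) (Z.getD (s + 2) x)) ∨
    (blue (Z.getD s x) (Z.getD (s + 1) x) ∧ red (Z.getD (s + 1) x) (Z.getD (s + 2) x)) :=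
  h.2 _ _ _ (Z.getD_triple_infix x hs)

theorem isBlueClosedWalk_of_getD_eq (hdisj : ∀ u w, red u w → ¬ blue u w)
    (h : IsChainWalk red blue Z) (x : V) {i a : ℕ} (ha : 0 < a) (hlen : i + a < Z.length)
    (hclosed : Z.getD (i + a) x = Z.getD i x)
    (hjunction : ¬ (red (Z.getD (i + (a - 1)) x) (Z.getD (i + a) x) ∧
      red (Z.getD i x) (Z.getD (i + 1) x))) :
    IsBlueClosedWalk red blue a (fun t => Z.getD (i + t % a) x) :=
  IsBlueClosedWalk.of_loop (fun s => Z.getD (i + s) x) ha hclosed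
    (fun s hs => h.step x (by omega))
    (fun s hs ⟨hr₁, hr₂⟩ => by
      rcases h.alternate x (s := i + s) (by omega) with ⟨-, hb₂⟩ | ⟨hb₁, -⟩
      · exact hdisj _ _ hr₂ hb₂
      · exact hdisj _ _ hr₁ hb₁)
    hjunction

theorem nodup_s6 (hdisj : ∀ u w, red u w → ¬ blue u w) (hred : ¬ HasClosedWalk red)
    (hblue : ¬ HasClosedWalk blue) (hblueCycle : ¬ BlueCycle red blue)
    (hredCycle : ¬ BlueCycle blue red) (h : IsChainWalk red blue Z) : Z.Nodup := by
  rw [List.nodup_iff_getElem?_ne_getElem?]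
  intro i j hij hj heq
  obtain ⟨x⟩ : Nonempty V := ⟨Z[i]'(by omega)⟩
  have hclosed : Z.getD (i + (j - i)) x = Z.getD i x := by
    simp [List.getD_eq_getElem?_getD, Nat.add_sub_cancel' hij.le, heq]
  by_cases hjunction : red (Z.getD (i + (j - i - 1)) x) (Z.getD (i + (j - i)) x) ∧
      red (Z.getD i x) (Z.getD (i + 1) x)
  · refine hredCycle (IsBlueClosedWalk.blueCycle (irrefl_of_not_hasClosedWalk hblue) hred
      (h.symm.isBlueClosedWalk_of_getD_eq (fun u w hb hr => hdisj u w hr hb) x (by omega)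
        (by omega) hclosed ?_))
    exact fun hb => hdisj _ _ hjunction.1 hb.1
  · exact hblueCycle (IsBlueClosedWalk.blueCycle (irrefl_of_not_hasClosedWalk hred) hblue
      (h.isBlueClosedWalk_of_getD_eq hdisj x (by omega) (by omega) hclosed hjunction))

theorem not_before_of_isChain_blue (hdisj : ∀ u w, red u w → ¬ blue u w)
    (hred : ∀ x, ¬ red x x) (hblue : ¬ HasClosedWalk blue) (hblueCycle : ¬ BlueCycle red blue)
    (h : IsChainWalk red blue Z) {P : List V} (hP : P.IsChain blue) {v v' : V}
    (hZ : Before Z v v') : ¬ Before P v' v := by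
  obtain ⟨zi, zj, hz, hzi, hzj⟩ := hZ
  rintro ⟨p', p, hp, hp', hpv⟩
  have hzj_len := (List.getElem?_eq_some_iff.mp hzj).1
  have hp_len := (List.getElem?_eq_some_iff.mp hpv).1
  set a := zj - zi
  set c := p - p'
  let g : ℕ → V := fun s => if s ≤ a then Z.getD (zi + s) v else P.getD (p' + (s - a)) v
  have hgZ : ∀ s ≤ a, g s = Z.getD (zi + s) v := fun s hs => if_pos hs
  have hgP : ∀ s, a ≤ s → g s = P.getD (p' + (s - a)) v := by
    intro s hs
    rcases hs.eq_or_lt with rfl | hs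
    · rw [hgZ a le_rfl, Nat.add_sub_cancel' hz.le, Nat.sub_self, Nat.add_zero,
        List.getD_eq_of_getElem?_eq_some hzj, List.getD_eq_of_getElem?_eq_some hp']
    · exact if_neg (by omega)
  have hclosed : g (a + c) = g 0 := by
    rw [hgP _ (by omega), hgZ 0 (by omega), show p' + (a + c - a) = p by omega,
      List.getD_eq_of_getElem?_eq_some hpv, Nat.add_zero, List.getD_eq_of_getElem?_eq_some hzi]
  have hgblue : ∀ s, a ≤ s → s < a + c → blue (g s) (g (s + 1)) := by
    intro s hs hsc
    rw [hgP s hs, hgP (s + 1) (by omega), show p' + (s + 1 - a) = p' + (s - a) + 1 by omega]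
    exact hP.rel_getD v (by omega)
  have hwalk : IsBlueClosedWalk red blue (a + c) (fun t => g (t % (a + c))) := by
    refine IsBlueClosedWalk.of_loop g (by omega) hclosed (fun s hs => ?_) (fun s hs => ?_) ?_
    · rcases Nat.lt_or_ge s a with hsa | hsa
      · rw [hgZ s hsa.le, hgZ (s + 1) hsa]
        exact h.step v (by omega)
      · exact .inr (hgblue s hsa hs)
    · rcases Nat.lt_or_ge (s + 2) (a + 1) with hsa | hsa
      · rw [hgZ s (by omega), hgZ (s + 1) (by omega), hgZ (s + 2) (by omega)]
        rintro ⟨hr₁, hr₂⟩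
        rcases h.alternate v (s := zi + s) (by omega) with ⟨-, hb₂⟩ | ⟨hb₁, -⟩
        · exact hdisj _ _ hr₂ hb₂
        · exact hdisj _ _ hr₁ hb₁
      · exact fun hr => hdisj _ _ hr.2 (hgblue (s + 1) (by omega) (by omega))
    · rintro ⟨hr, -⟩
      have hb := hgblue (a + c - 1) (by omega) (by omega)
      rw [show a + c - 1 + 1 = a + c by omega] at hb
      exact hdisj _ _ hr hb
  exact hblueCycle (hwalk.blueCycle hred hblue)

end IsChainWalk

theorem stmt6_general {V : Type} {k : ℕ} (C : TwoCommodity V k)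
    (hnoblue : ¬ BlueCycle (pathRel C.R) (pathRel C.B))
    (hnored : ¬ RedCycle (pathRel C.R) (pathRel C.B))
    (Z : List V) (hZ : IsChainWalk (pathRel C.R) (pathRel C.B) Z)
    (P : List V) (hP : (∃ i, P = C.R i) ∨ (∃ i, P = C.B i))
    (v v' : V) (hvP : v ∈ P) (hv'P : v' ∈ P)
    (hbef : Before Z v v') :
    Before P v v' := by
  have hdisj : ∀ u w, pathRel C.R u w → ¬ pathRel C.B u w :=
    fun u w hr hb => C.edgeDisj u w (.inl hr) (.inl hb)
  have hred := not_hasClosedWalk_pathRel C.Rnd C.Rdisj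
  have hblue := not_hasClosedWalk_pathRel C.Bnd C.Bdisj
  rcases before_or_eq_or_before hvP hv'P with hvv' | rfl | hv'v
  · exact hvv'
  · exact absurd rfl (hbef.ne (hZ.nodup_s6 hdisj hred hblue hnoblue hnored))
  · rcases hP with ⟨i, rfl⟩ | ⟨i, rfl⟩
    · exact absurd hv'v (hZ.symm.not_before_of_isChain_blue (fun u w hb hr => hdisj u w hr hb)
        (irrefl_of_not_hasClosedWalk hblue) hred hnored (isChain_pathRel C.R i) hbef)
    · exact absurd hv'v (hZ.not_before_of_isChain_blue hdisj
        (irrefl_of_not_hasClosedWalk hred) hblue hnoblue (isChain_pathRel C.B i) hbef)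

/-- If `H̃` has no red or blue cycles, `Z` is a chain, and `P` is one of the red or blue
paths, then any two vertices lying on both `Z` and `P` appear in the same order on `Z`
and on `P`. -/
theorem stmt6 {V : Type} [Fintype V] {k : ℕ} (hk : 0 < k) (C : TwoCommodity V k)
    (hnoblue : ¬ BlueCycle (pathRel C.R) (pathRel C.B))
    (hnored : ¬ RedCycle (pathRel C.R) (pathRel C.B))
    (Z : List V) (hZ : IsChainWalk (pathRel C.R) (pathRel C.B) Z)
    (P : List V) (hP : (∃ i, P = C.R i) ∨ (∃ i, P = C.B i))
    (v v' : V) (hvP : v ∈ P) (hv'P : v' ∈ P)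
    (hvZ : v ∈ Z) (hv'Z : v' ∈ Z)
    (hbef : Before Z v v') :
    Before P v v' :=
  stmt6_general C hnoblue hnored Z hZ P hP v v' hvP hv'P hbef
end

section
/- Let H be a graph and suppose there exist two labelings ℓ, ℓ' : V(H) → L with |L| = 2k such that: (i) every non-terminal vertex lies on exactly one of k red paths and exactly one of k blue paths; (ii) for any red path R and blue path B, two vertices on both R and B with the same ℓ-label appear in the same order on R and B; and (iii) two vertices on both R and B with the same ℓ'-label appear in opposite orders on R and B. Then the number of non-terminal vertices of H is at most 4k^4. -/
/-!
A vertex outside `W` is determined by its red path, its blue path and its two labels: two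
distinct vertices sharing all four are ordered one way on the red path, and then the `ℓ`-condition
and the `ℓ'`-condition put them in both orders on the blue path.
-/

namespace Before

variable {V : Type} {l : List V} {u v : V}

theorem asymm (hl : l.Nodup) (huv : Before l u v) : ¬ Before l v u := by
  obtain ⟨i, j, hij, hi, hj⟩ := huv
  rintro ⟨i', j', hij', hi', hj'⟩
  have hi_lt : i < l.length := (List.getElem?_eq_some_iff.mp hi).1
  have hj_lt : j < l.length := (List.getElem?_eq_some_iff.mp hj).1
  have hij' : i = j' := (List.getElem?_inj hi_lt hl).mp (hi.trans hj'.symm)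
  have hji' : j = i' := (List.getElem?_inj hj_lt hl).mp (hj.trans hi'.symm)
  omega

theorem or_swap_of_ne [DecidableEq V] (hu : u ∈ l) (hv : v ∈ l) (huv : u ≠ v) :
    Before l u v ∨ Before l v u := by
  have hidx : l.idxOf u ≠ l.idxOf v := fun h => huv ((List.idxOf_inj hu).mp h)
  rcases Nat.lt_or_gt_of_ne hidx with h | h
  · exact Or.inl ⟨_, _, h, List.getElem?_idxOf hu, List.getElem?_idxOf hv⟩
  · exact Or.inr ⟨_, _, h, List.getElem?_idxOf hv, List.getElem?_idxOf hu⟩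

end Before

theorem Set.subsingleton_of_before_agree_of_before_reverse {V : Type} {l l' : List V} {s : Set V}
    (hl' : l'.Nodup) (hs : ∀ x ∈ s, x ∈ l)
    (hagree : ∀ x ∈ s, ∀ y ∈ s, Before l x y → Before l' x y)
    (hreverse : ∀ x ∈ s, ∀ y ∈ s, Before l x y → Before l' y x) :
    s.Subsingleton := by
  classical
  intro x hx y hy
  by_contra hxy
  rcases Before.or_swap_of_ne (hs x hx) (hs y hy) hxy with h | h
  · exact Before.asymm hl' (hagree x hx y hy h) (hreverse x hx y hy h)
  · exact Before.asymm hl' (hagree y hy x hx h) (hreverse y hy x hx h)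

theorem stmt8_general {V L : Type} [Fintype L] {k : ℕ}
    (hL : Fintype.card L = 2 * k)
    (W : Set V) (R B : Fin k → List V) (ℓ ℓ' : V → L)
    (hBnd : ∀ i, (B i).Nodup)
    (hcov : ∀ v ∉ W, (∃ i, v ∈ R i) ∧ (∃ j, v ∈ B j))
    (hsame : ∀ (i j : Fin k) (v v' : V),
      v ∈ R i → v ∈ B j → v' ∈ R i → v' ∈ B j → ℓ v = ℓ v' →
      (Before (R i) v v' ↔ Before (B j) v v'))
    (hopp : ∀ (i j : Fin k) (v v' : V),
      v ∈ R i → v ∈ B j → v' ∈ R i → v' ∈ B j → ℓ' v = ℓ' v' →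
      (Before (R i) v v' ↔ Before (B j) v' v)) :
    Wᶜ.ncard ≤ 4 * k ^ 4 := by
  choose red hred using fun v : ↥Wᶜ => (hcov v v.2).1
  choose blue hblue using fun v : ↥Wᶜ => (hcov v v.2).2
  have hfiber : ∀ i j a a', {v | v ∈ R i ∧ v ∈ B j ∧ ℓ v = a ∧ ℓ' v = a'}.Subsingleton :=
    fun i j a a' => Set.subsingleton_of_before_agree_of_before_reverse (hBnd j)
      (fun x hx => hx.1)
      (fun x hx y hy => (hsame i j x y hx.1 hx.2.1 hy.1 hy.2.1 (hx.2.2.1.trans hy.2.2.1.symm)).mp)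
      (fun x hx y hy => (hopp i j x y hx.1 hx.2.1 hy.1 hy.2.1 (hx.2.2.2.trans hy.2.2.2.symm)).mp)
  have hinj : Function.Injective fun v : ↥Wᶜ => (red v, blue v, ℓ v, ℓ' v) := by
    intro v w hvw
    simp only [Prod.mk.injEq] at hvw
    obtain ⟨hr, hb, ha, ha'⟩ := hvw
    exact Subtype.ext <| hfiber (red v) (blue v) (ℓ v) (ℓ' v)
      ⟨hred v, hblue v, rfl, rfl⟩ ⟨hr ▸ hred w, hb ▸ hblue w, ha.symm, ha'.symm⟩
  calc Wᶜ.ncard = Nat.card ↥Wᶜ := (Nat.card_coe_set_eq _).symm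
    _ ≤ Nat.card (Fin k × Fin k × L × L) := Nat.card_le_card_of_injective _ hinj
    _ = 4 * k ^ 4 := by rw [Nat.card_eq_fintype_card, Fintype.card_prod, Fintype.card_prod, Fintype.card_prod,
        Fintype.card_fin, hL]; ring

/-- Pigeonhole step: if every non-terminal vertex lies on exactly one of `k` red paths
and one of `k` blue paths, and two labelings `ℓ, ℓ'` into a set of `2k` labels are such
that equal `ℓ`-labels force equal relative order on a common red/blue path pair while
equal `ℓ'`-labels force opposite relative order, then there are at most `4k⁴`
non-terminal vertices. -/
theorem stmt8 {V L : Type} [Fintype V] [Fintype L] {k : ℕ}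
    (hL : Fintype.card L = 2 * k)
    (W : Set V) (R B : Fin k → List V) (ℓ ℓ' : V → L)
    (hRnd : ∀ i, (R i).Nodup) (hBnd : ∀ i, (B i).Nodup)
    (hRdisj : ∀ i j, i ≠ j → ∀ v, v ∈ R i → v ∉ R j)
    (hBdisj : ∀ i j, i ≠ j → ∀ v, v ∈ B i → v ∉ B j)
    (hcov : ∀ v ∉ W, (∃ i, v ∈ R i) ∧ (∃ j, v ∈ B j))
    (hsame : ∀ (i j : Fin k) (v v' : V),
      v ∈ R i → v ∈ B j → v' ∈ R i → v' ∈ B j → ℓ v = ℓ v' →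
      (Before (R i) v v' ↔ Before (B j) v v'))
    (hopp : ∀ (i j : Fin k) (v v' : V),
      v ∈ R i → v ∈ B j → v' ∈ R i → v' ∈ B j → ℓ' v = ℓ' v' →
      (Before (R i) v v' ↔ Before (B j) v' v)) :
    Wᶜ.ncard ≤ 4 * k ^ 4 :=
  stmt8_general hL W R B ℓ ℓ' hBnd hcov hsame hopp
end

section
/- Let F be a graph in which the minimum cut value is at least C, i.e., for every nonempty proper subset S of V(F), |out(S)| ≥ C. Suppose each edge of a subset E'' ⊆ E(F) is independently deleted with probability at most 3/4, and all other edges are retained. Then for any fixed cut S with value λ·C (λ ≥ 1), if at least half the edges of out(S) lie outside E'' or form a matching-like independent subset E' ⊆ out(S)∩E'' of size at least |out(S)|/4 whose deletion events are mutually independent, the probability that the surviving cut has value less than |out(S)|/32 is at most e^{-λC/(12·32)}. -/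
open MeasureTheory ProbabilityTheory Classical

/-!
Edges outside `E''` are never deleted, so if they make up half of `out(S)` the cut always keeps
at least `|out(S)|/2` edges. Otherwise the survivors of `E'` alone are a sum of at least
`|out(S)|/4` independent indicators, each equal to `1` with probability at least `1/4`, and the
Chernoff bound at `t = -1/2` bounds the probability that fewer than `|out(S)|/32` of them survive.
-/

open Real Finset

namespace CutSurvival

variable {Ω ι : Type*}

/-- The elements of `s` that are not deleted at `ω`, where `D i ω = true` means `i` is deleted. -/
def survivors (D : ι → Ω → Bool) (s : Finset ι) (ω : Ω) : Finset ι :=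
  s.filter fun i => D i ω = false

lemma sdiff_subset_survivors [DecidableEq ι] {D : ι → Ω → Bool} {E : Finset ι}
    (hkeep : ∀ i ∉ E, ∀ ω, D i ω = false) (s : Finset ι) (ω : Ω) :
    s \ E ⊆ survivors D s ω := fun i hi => by
  rw [mem_sdiff] at hi
  exact mem_filter.2 ⟨hi.1, hkeep i hi.2 ω⟩

lemma survivors_mono (D : ι → Ω → Bool) {s t : Finset ι} (hst : s ⊆ t) (ω : Ω) :
    survivors D s ω ⊆ survivors D t ω :=
  filter_subset_filter _ hst

variable [MeasurableSpace Ω] {μ : Measure Ω} [IsProbabilityMeasure μ]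

lemma one_sub_toReal_le_measureReal_eq_false {f : Ω → Bool} (hf : Measurable f)
    {r : ENNReal} (hr : μ {ω | f ω = true} ≤ r) (hr_top : r ≠ ⊤) :
    1 - r.toReal ≤ μ.real {ω | f ω = false} := by
  have hcompl : {ω | f ω = false} = {ω | f ω = true}ᶜ := by ext ω; simp
  have hA : MeasurableSet {ω | f ω = true} := hf (measurableSet_singleton true)
  rw [hcompl, probReal_compl_eq_one_sub hA]
  have : μ.real {ω | f ω = true} ≤ r.toReal := ENNReal.toReal_mono hr_top hr
  linarith

lemma mgf_indicator_one {A : Set Ω} (hA : MeasurableSet A) (t : ℝ) :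
    mgf (A.indicator 1) μ t = 1 + (exp t - 1) * μ.real A := by
  have hexp : (fun ω => exp (t * A.indicator 1 ω)) =
      fun ω => 1 + A.indicator (fun _ => exp t - 1) ω := by
    funext ω
    by_cases h : ω ∈ A <;> simp [h]
  rw [mgf, hexp, integral_add (integrable_const 1) ((integrable_const _).indicator hA),
    integral_indicator_const _ hA]
  simp [mul_comm]

lemma mgf_indicator_one_le_exp {A : Set Ω} (hA : MeasurableSet A) {p t : ℝ} (ht : t ≤ 0)
    (hp : p ≤ μ.real A) : mgf (A.indicator 1) μ t ≤ exp ((exp t - 1) * p) := by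
  have : exp t - 1 ≤ 0 := by rw [sub_nonpos]; exact exp_le_one_iff.2 ht
  calc mgf (A.indicator 1) μ t = 1 + (exp t - 1) * μ.real A := mgf_indicator_one hA t
    _ ≤ (exp t - 1) * p + 1 := by nlinarith
    _ ≤ exp ((exp t - 1) * p) := add_one_le_exp _

lemma measureReal_card_survivors_le_le (D : ι → Ω → Bool) (hmeas : ∀ i, Measurable (D i))
    (hind : iIndepFun D μ) (s : Finset ι) {p t : ℝ} (ht : t ≤ 0)
    (hp : ∀ i ∈ s, p ≤ μ.real {ω | D i ω = false}) (a : ℝ) :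
    μ.real {ω | (#(survivors D s ω) : ℝ) ≤ a} ≤ exp (-t * a + (exp t - 1) * p * #s) := by
  set X : ι → Ω → ℝ := fun i => {ω | D i ω = false}.indicator 1
  have hA : ∀ i, MeasurableSet {ω | D i ω = false} := fun i => hmeas i (measurableSet_singleton _)
  have hX_meas : ∀ i, Measurable (X i) := fun i => measurable_const.indicator (hA i)
  have hX_ind : iIndepFun X μ := by
    convert hind.comp (fun _ b => if b = false then (1 : ℝ) else 0) fun _ => .of_discrete
    funext i
    simp [X, Set.indicator_apply]
  have hcount : ∀ ω, (#(survivors D s ω) : ℝ) = (∑ i ∈ s, X i) ω := fun ω => by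
    simp only [survivors, Finset.sum_apply, X, Set.indicator_apply, Set.mem_ofPred_eq,
      Pi.one_apply]
    exact natCast_card_filter _ _
  have hX_int : ∀ i ∈ s, Integrable (fun ω => exp (t * X i ω)) μ := fun i _ =>
    integrable_exp_mul_of_mem_Icc (hX_meas i).aemeasurable
      (ae_of_all _ fun ω => ⟨Set.indicator_nonneg (fun _ _ => zero_le_one) ω,
        Set.indicator_le_self' (fun _ _ => zero_le_one) ω⟩)
  calc μ.real {ω | (#(survivors D s ω) : ℝ) ≤ a}
      = μ.real {ω | (∑ i ∈ s, X i) ω ≤ a} := by simp only [hcount]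
    _ ≤ exp (-t * a) * mgf (∑ i ∈ s, X i) μ t :=
      measure_le_le_exp_mul_mgf a ht (hX_ind.integrable_exp_mul_sum hX_meas hX_int)
    _ = exp (-t * a) * ∏ i ∈ s, mgf (X i) μ t := by rw [hX_ind.mgf_sum hX_meas]
    _ ≤ exp (-t * a) * ∏ _i ∈ s, exp ((exp t - 1) * p) := by
      gcongr with i hi
      · exact fun i _ => mgf_nonneg
      · exact mgf_indicator_one_le_exp (hA i) ht (hp i hi)
    _ = exp (-t * a + (exp t - 1) * p * #s) := by
      rw [prod_const, ← exp_nat_mul, ← exp_add]; ring_nf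

lemma measureReal_card_survivors_le_le_of_deletion_le (D : ι → Ω → Bool)
    (hmeas : ∀ i, Measurable (D i)) (hind : iIndepFun D μ) (s : Finset ι)
    (hdel : ∀ i ∈ s, μ {ω | D i ω = true} ≤ 3 / 4) (a : ℝ) :
    μ.real {ω | (#(survivors D s ω) : ℝ) ≤ a} ≤ exp (a / 2 - #s / 12) := by
  have hp : ∀ i ∈ s, 1 / 4 ≤ μ.real {ω | D i ω = false} := fun i hi => by
    have := one_sub_toReal_le_measureReal_eq_false (hmeas i) (hdel i hi)
      (ENNReal.div_ne_top (by norm_num) (by norm_num))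
    norm_num at this ⊢
    linarith
  refine (measureReal_card_survivors_le_le D hmeas hind s
    (by norm_num : -(1 / 2 : ℝ) ≤ 0) hp a).trans ?_
  -- `exp (1/2) ≥ 3/2`
  have h : exp (-(1 / 2)) ≤ 2 / 3 := by
    rw [exp_neg, inv_le_comm₀ (exp_pos _) (by norm_num)]
    linarith [add_one_le_exp (1 / 2 : ℝ)]
  gcongr
  nlinarith [(#s).cast_nonneg (α := ℝ)]

lemma measureReal_card_survivors_lt_le (D : ι → Ω → Bool) {s t : Finset ι} (hst : s ⊆ t)
    (a : ℝ) :
    μ.real {ω | (#(survivors D t ω) : ℝ) < a} ≤ μ.real {ω | (#(survivors D s ω) : ℝ) ≤ a} :=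
  measureReal_mono fun ω hω => by
    have : (#(survivors D s ω) : ℝ) ≤ #(survivors D t ω) :=
      Nat.cast_le.2 (card_le_card (survivors_mono D hst ω))
    simp only [Set.mem_ofPred_eq] at hω ⊢
    linarith

end CutSurvival

open CutSurvival in
theorem stmt12_general {Ω : Type} [MeasurableSpace Ω] (μ : Measure Ω) [IsProbabilityMeasure μ]
    {ε : Type} [DecidableEq ε]
    (D : ε → Ω → Bool) (hmeas : ∀ e, Measurable (D e))
    (hind : iIndepFun D μ)
    (E'' : Finset ε)
    (hdel : ∀ e ∈ E'', μ {ω | D e ω = true} ≤ 3 / 4)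
    (hkeep : ∀ e ∉ E'', ∀ ω, D e ω = false)
    (cutS : Finset ε) (C lam : ℝ)
    (hval : (cutS.card : ℝ) = lam * C)
    (hhyp : ((cutS \ E'').card : ℝ) ≥ (cutS.card : ℝ) / 2 ∨
      ∃ E' ⊆ cutS ∩ E'', ((E'.card : ℝ) ≥ (cutS.card : ℝ) / 4)) :
    (μ {ω | ((cutS.filter fun e => D e ω = false).card : ℝ) <
        (cutS.card : ℝ) / 32}).toReal ≤ Real.exp (-(lam * C) / (12 * 32)) := by
  change μ.real {ω | (#(survivors D cutS ω) : ℝ) < #cutS / 32} ≤ _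
  have hm : (0 : ℝ) ≤ #cutS := (#cutS).cast_nonneg
  rcases hhyp with hhalf | ⟨E', hE', hE'_card⟩
  · have hempty : {ω | (#(survivors D cutS ω) : ℝ) < #cutS / 32} = ∅ :=
      Set.eq_empty_of_forall_notMem fun ω hω => by
        have : ((cutS \ E'').card : ℝ) ≤ #(survivors D cutS ω) :=
          Nat.cast_le.2 (card_le_card (sdiff_subset_survivors hkeep cutS ω))
        simp only [Set.mem_ofPred_eq] at hω
        linarith
    rw [hempty, measureReal_empty]
    positivity
  · calc μ.real {ω | (#(survivors D cutS ω) : ℝ) < #cutS / 32}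
        ≤ μ.real {ω | (#(survivors D E' ω) : ℝ) ≤ #cutS / 32} :=
          measureReal_card_survivors_lt_le D (hE'.trans inter_subset_left) _
      _ ≤ exp (#cutS / 32 / 2 - #E' / 12) :=
        measureReal_card_survivors_le_le_of_deletion_le D hmeas hind E'
          (fun e he => hdel e (inter_subset_right (hE' he))) _
      _ ≤ exp (-(lam * C) / (12 * 32)) := by
        rw [← hval]
        gcongr
        linarith

/-- Karger-style cut-survival bound. An abstract edge set `ε`; `cutS` is the set `out(S)`
of edges of a cut of value `λ·C` (with `C` the minimum cut value, `λ ≥ 1`); edges of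
`E''` are deleted independently, each with probability at most `3/4`, and edges outside
`E''` are always retained. If at least half the edges of `out(S)` lie outside `E''`, or
some subset `E' ⊆ out(S) ∩ E''` of size at least `|out(S)|/4` exists, then the
probability that fewer than `|out(S)|/32` edges of the cut survive is at most
`exp(-λC/384)`. -/
theorem stmt12 {Ω : Type} [MeasurableSpace Ω] (μ : Measure Ω) [IsProbabilityMeasure μ]
    {ε : Type} [Fintype ε] [DecidableEq ε]
    (D : ε → Ω → Bool) (hmeas : ∀ e, Measurable (D e))
    (hind : iIndepFun D μ)
    (E'' : Finset ε)
    (hdel : ∀ e ∈ E'', μ {ω | D e ω = true} ≤ 3 / 4)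
    (hkeep : ∀ e ∉ E'', ∀ ω, D e ω = false)
    (cutS : Finset ε) (C lam : ℝ) (hC : 0 < C) (hlam : 1 ≤ lam)
    (hval : (cutS.card : ℝ) = lam * C)
    (hhyp : ((cutS \ E'').card : ℝ) ≥ (cutS.card : ℝ) / 2 ∨
      ∃ E' ⊆ cutS ∩ E'', ((E'.card : ℝ) ≥ (cutS.card : ℝ) / 4)) :
    (μ {ω | ((cutS.filter fun e => D e ω = false).card : ℝ) <
        (cutS.card : ℝ) / 32}).toReal ≤ Real.exp (-(lam * C) / (12 * 32)) :=
  stmt12_general μ D hmeas hind E'' hdel hkeep cutS C lam hval hhyp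
end

section
/- Let H be a graph, F the graph obtained from H by contracting each path segment σ in a family Σ of vertex-disjoint paths covering V(H) into a single super-node v_σ, where each segment has at most L vertices and hence each super-node has degree at most O(L) when H has bounded degree. If a set U of super-nodes (images of a vertex set A ⊆ V(H), one per segment) is β-well-linked in F, then A is Ω(β/L)-well-linked in H, assuming every edge of H has congestion O(1) under the correspondence. -/
/-!
Given a cut `X` of `H`, cut the super-nodes by the side of `X` on which their representative
lies, the representative of a segment being its vertex of `A` when it has one. This cut of `F`
splits `U` exactly as `X` splits `A`. Every edge `ij` it cuts is charged to an edge of `H` cut by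
`X` leaving segment `i` or `j`: either the edge of `H` realising `ij` is itself cut, or one of the
two connected segments contains vertices on both sides of `X`. An edge of `H` leaving segment `k`
is charged only by the at most `2 d L` ordered edges of `F` at `k` (`H` has degree at most `d`,
segments have at most `L` vertices), so `F` loses at most a factor `2 d L` against `H`.
-/

def cutPairs {V : Type} (G : SimpleGraph V) (A : Set V) : Set (V × V) :=
  {p | G.Adj p.1 p.2 ∧ p.1 ∈ A ∧ p.2 ∈ Aᶜ}

def WellLinked {V : Type} (G : SimpleGraph V) (T : Set V) (α : ℝ) : Prop :=
  ∀ A : Set V,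
    α * min ((A ∩ T).ncard : ℝ) ((Aᶜ ∩ T).ncard : ℝ) ≤ ((cutPairs G A).ncard : ℝ)

open Set Function

theorem Set.ncard_le_mul_ncard_of_exists_rel {α β : Type*} {s : Set α} {t : Set β}
    (r : α → β → Prop) (n : ℕ) (hr : ∀ a ∈ s, ∃ b ∈ t, r a b)
    (hn : ∀ b ∈ t, {a ∈ s | r a b}.ncard ≤ n)
    (hs : s.Finite := by toFinite_tac) (ht : t.Finite := by toFinite_tac) :
    s.ncard ≤ n * t.ncard := by
  have hcover : s ⊆ ⋃ b ∈ ht.toFinset, {a ∈ s | r a b} := by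
    intro a ha
    obtain ⟨b, hb, hab⟩ := hr a ha
    exact mem_biUnion (ht.mem_toFinset.2 hb) ⟨ha, hab⟩
  calc s.ncard ≤ (⋃ b ∈ ht.toFinset, {a ∈ s | r a b}).ncard :=
        ncard_le_ncard hcover (hs.subset (iUnion₂_subset fun _ _ => sep_subset _ _))
    _ ≤ ∑ b ∈ ht.toFinset, {a ∈ s | r a b}.ncard := Finset.set_ncard_biUnion_le _ _
    _ ≤ ∑ _b ∈ ht.toFinset, n := Finset.sum_le_sum fun b hb => hn b (ht.mem_toFinset.1 hb)
    _ = n * t.ncard := by rw [Finset.sum_const, smul_eq_mul, mul_comm, ncard_eq_toFinset_card t ht]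

theorem Set.BijOn.ncard_preimage_inter {α β : Type*} {f : α → β} {s : Set α} {t : Set β}
    (hf : BijOn f s t) (X : Set β) : (f ⁻¹' X ∩ s).ncard = (X ∩ t).ncard := by
  rw [← (hf.injOn.mono inter_subset_right).ncard_image, image_preimage_inter,
    hf.image_eq]

namespace SimpleGraph

variable {V : Type*} (G : SimpleGraph V)

theorem ncard_neighborhood_le [Finite V] {d : ℕ} (hdeg : ∀ v, (G.neighborSet v).ncard ≤ d)
    (s : Set V) : {v | ∃ u ∈ s, G.Adj u v}.ncard ≤ d * s.ncard :=
  ncard_le_mul_ncard_of_exists_rel (fun v u => G.Adj u v) d (fun _ hv => hv) fun u _ =>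
    (ncard_le_ncard fun _ hv => hv.2).trans (hdeg u)

theorem ncard_adj_incident_le [Finite V] (k : V) :
    {p : V × V | G.Adj p.1 p.2 ∧ (p.1 = k ∨ p.2 = k)}.ncard ≤ 2 * (G.neighborSet k).ncard := by
  have hsub : {p : V × V | G.Adj p.1 p.2 ∧ (p.1 = k ∨ p.2 = k)} ⊆
      {k} ×ˢ G.neighborSet k ∪ G.neighborSet k ×ˢ {k} := by
    rintro ⟨u, v⟩ ⟨huv, rfl | rfl⟩
    · exact Or.inl ⟨rfl, huv⟩
    · exact Or.inr ⟨huv.symm, rfl⟩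
  calc _ ≤ ({k} ×ˢ G.neighborSet k ∪ G.neighborSet k ×ˢ {k}).ncard := ncard_le_ncard hsub
    _ ≤ ({k} ×ˢ G.neighborSet k).ncard + (G.neighborSet k ×ˢ {k}).ncard := ncard_union_le _ _
    _ = 2 * (G.neighborSet k).ncard := by simp only [ncard_prod, ncard_singleton]; ring

end SimpleGraph

theorem exists_mem_cutPairs_of_connected_induce {V : Type} {H : SimpleGraph V} {s X : Set V}
    (hconn : (H.induce s).Connected) {x y : V} (hx : x ∈ s) (hy : y ∈ s) (hxX : x ∈ X)
    (hyX : y ∉ X) : ∃ q ∈ cutPairs H X, q.1 ∈ s := by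
  obtain ⟨w⟩ := hconn.preconnected ⟨x, hx⟩ ⟨y, hy⟩
  obtain ⟨e, -, he₁, he₂⟩ := w.exists_boundary_dart {a : s | (a : V) ∈ X} hxX hyX
  exact ⟨(e.fst, e.snd), ⟨e.adj, he₁, he₂⟩, e.fst.2⟩

section Contraction

variable {V ι : Type} {H : SimpleGraph V} {F : SimpleGraph ι} {part : ι → Set V}

theorem ncard_neighborSet_le_of_contraction [Finite V] [Finite ι] {d : ℕ}
    (hdeg : ∀ v, (H.neighborSet v).ncard ≤ d) (hdisj : Pairwise (Disjoint on part))
    (hadj : ∀ i j, F.Adj i j → ∃ u ∈ part i, ∃ v ∈ part j, H.Adj u v) (k : ι) :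
    (F.neighborSet k).ncard ≤ d * (part k).ncard := by
  have hfiber : ∀ v, {j ∈ F.neighborSet k | v ∈ part j}.ncard ≤ 1 := fun v =>
    (ncard_le_one (toFinite _)).2 fun _ hi _ hj => hdisj.eq <| not_disjoint_iff.2 ⟨v, hi.2, hj.2⟩
  calc (F.neighborSet k).ncard ≤ 1 * {v | ∃ u ∈ part k, H.Adj u v}.ncard :=
        ncard_le_mul_ncard_of_exists_rel (fun j v => v ∈ part j) 1
          (fun j hj => by
            obtain ⟨u, hu, v, hv, huv⟩ := hadj k j hj
            exact ⟨v, ⟨u, hu, huv⟩, hv⟩)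
          fun v _ => hfiber v
    _ ≤ d * (part k).ncard := (one_mul _).trans_le (H.ncard_neighborhood_le hdeg (part k))

theorem exists_mem_cutPairs_of_mem_cutPairs_contraction {r : ι → V} (hr : ∀ i, r i ∈ part i)
    (hconn : ∀ i, (H.induce (part i)).Connected)
    (hadj : ∀ i j, F.Adj i j → ∃ u ∈ part i, ∃ v ∈ part j, H.Adj u v) {X : Set V} :
    ∀ p ∈ cutPairs F (r ⁻¹' X), ∃ q ∈ cutPairs H X, q.1 ∈ part p.1 ∨ q.1 ∈ part p.2 := by
  rintro ⟨i, j⟩ ⟨hij, hiX, hjX⟩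
  obtain ⟨u, hu, v, hv, huv⟩ := hadj i j hij
  by_cases huX : u ∈ X
  · by_cases hvX : v ∈ X
    · obtain ⟨q, hq, hqj⟩ := exists_mem_cutPairs_of_connected_induce (hconn j) hv (hr j) hvX hjX
      exact ⟨q, hq, Or.inr hqj⟩
    · exact ⟨(u, v), ⟨huv, huX, hvX⟩, Or.inl hu⟩
  · obtain ⟨q, hq, hqi⟩ := exists_mem_cutPairs_of_connected_induce (hconn i) (hr i) hu hiX huX
    exact ⟨q, hq, Or.inl hqi⟩

theorem ncard_cutPairs_contraction_le [Finite V] [Finite ι] {d L : ℕ}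
    (hdeg : ∀ v, (H.neighborSet v).ncard ≤ d) (hconn : ∀ i, (H.induce (part i)).Connected)
    (hL : ∀ i, (part i).ncard ≤ L) (hdisj : Pairwise (Disjoint on part))
    (hcover : ∀ v, ∃ i, v ∈ part i)
    (hadj : ∀ i j, F.Adj i j → ∃ u ∈ part i, ∃ v ∈ part j, H.Adj u v)
    {r : ι → V} (hr : ∀ i, r i ∈ part i) (X : Set V) :
    (cutPairs F (r ⁻¹' X)).ncard ≤ 2 * d * L * (cutPairs H X).ncard := by
  refine ncard_le_mul_ncard_of_exists_rel _ _
    (exists_mem_cutPairs_of_mem_cutPairs_contraction hr hconn hadj) fun q _ => ?_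
  obtain ⟨k, hk⟩ := hcover q.1
  have hsegment : ∀ i, q.1 ∈ part i → i = k := fun _ hi =>
    hdisj.eq <| not_disjoint_iff.2 ⟨q.1, hi, hk⟩
  have hsub : {p ∈ cutPairs F (r ⁻¹' X) | q.1 ∈ part p.1 ∨ q.1 ∈ part p.2} ⊆
      {p : ι × ι | F.Adj p.1 p.2 ∧ (p.1 = k ∨ p.2 = k)} := fun p ⟨hp, hq⟩ =>
    ⟨hp.1, hq.imp (hsegment _) (hsegment _)⟩
  calc _ ≤ 2 * (F.neighborSet k).ncard := (ncard_le_ncard hsub).trans (F.ncard_adj_incident_le k)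
    _ ≤ 2 * (d * L) := Nat.mul_le_mul_left 2
        ((ncard_neighborSet_le_of_contraction hdeg hdisj hadj k).trans
          (Nat.mul_le_mul_left d (hL k)))
    _ = 2 * d * L := (mul_assoc _ _ _).symm

theorem exists_bijOn_of_ncard_inter_le_one [Finite V] {A : Set V} (hne : ∀ i, (part i).Nonempty)
    (hdisj : Pairwise (Disjoint on part)) (hcover : ∀ v, ∃ i, v ∈ part i)
    (hA : ∀ i, (A ∩ part i).ncard ≤ 1) :
    ∃ r : ι → V, (∀ i, r i ∈ part i) ∧ BijOn r {i | ∃ a ∈ A, a ∈ part i} A := by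
  have hrep : ∀ i, ∃ v ∈ part i, (A ∩ part i).Nonempty → v ∈ A := fun i => by
    by_cases h : (A ∩ part i).Nonempty
    · exact ⟨h.some, h.some_mem.2, fun _ => h.some_mem.1⟩
    · exact ⟨(hne i).some, (hne i).some_mem, fun h' => absurd h' h⟩
  choose r hr hrA using hrep
  refine ⟨r, hr, fun i ⟨a, ha, hai⟩ => hrA i ⟨a, ha, hai⟩, fun i _ j _ hij => ?_, fun a ha => ?_⟩
  · exact hdisj.eq <| not_disjoint_iff.2 ⟨r i, hr i, hij ▸ hr j⟩
  · obtain ⟨i, hai⟩ := hcover a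
    have hrep_mem : r i ∈ A ∩ part i := ⟨hrA i ⟨a, ha, hai⟩, hr i⟩
    exact ⟨i, ⟨a, ha, hai⟩, (ncard_le_one (toFinite _)).1 (hA i) _ hrep_mem _ ⟨ha, hai⟩⟩

theorem WellLinked.of_contraction [Finite V] [Finite ι] {d L : ℕ} {β : ℝ} {A : Set V}
    (hdeg : ∀ v, (H.neighborSet v).ncard ≤ d) (hne : ∀ i, (part i).Nonempty)
    (hconn : ∀ i, (H.induce (part i)).Connected) (hL : ∀ i, (part i).ncard ≤ L)
    (hdisj : Pairwise (Disjoint on part)) (hcover : ∀ v, ∃ i, v ∈ part i)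
    (hadj : ∀ i j, F.Adj i j → ∃ u ∈ part i, ∃ v ∈ part j, H.Adj u v)
    (hA : ∀ i, (A ∩ part i).ncard ≤ 1) (hWL : WellLinked F {i | ∃ a ∈ A, a ∈ part i} β) :
    WellLinked H A (β / (2 * d * L)) := by
  obtain ⟨r, hr, hbij⟩ := exists_bijOn_of_ncard_inter_le_one hne hdisj hcover hA
  intro X
  have hF := hWL (r ⁻¹' X)
  rw [← preimage_compl, hbij.ncard_preimage_inter, hbij.ncard_preimage_inter] at hF
  have hcut : ((cutPairs F (r ⁻¹' X)).ncard : ℝ) ≤ 2 * d * L * (cutPairs H X).ncard := by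
    exact_mod_cast ncard_cutPairs_contraction_le hdeg hconn hL hdisj hcover hadj hr X
  rw [div_mul_eq_mul_div]
  exact div_le_of_le_mul₀ (by positivity) (by positivity) (by linarith)

end Contraction

/-- Well-linkedness transfers from the contracted graph back to the original graph.
`H` is a bounded-degree graph; its vertex set is partitioned into connected segments
`part i` of at most `L` vertices each; `F` is the graph obtained by contracting each
segment into a super-node; `A` has at most one vertex in each segment and `U` is the set
of super-nodes of segments meeting `A`. If `U` is `β`-well-linked in `F`, then `A` is
`Ω(β/L)`-well-linked in `H`. -/
theorem stmt15 :
    ∃ c : ℝ, 0 < c ∧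
      ∀ (V ι : Type) (_ : Fintype V) (_ : Fintype ι)
        (H : SimpleGraph V) (F : SimpleGraph ι) (part : ι → Set V) (L : ℕ) (β : ℝ)
        (A : Set V) (U : Set ι),
        0 < β →
        (∀ v : V, (H.neighborSet v).ncard ≤ 4) →
        (∀ i, (part i).Nonempty) →
        (∀ i, (H.induce (part i)).Connected) →
        (∀ i, (part i).ncard ≤ L) →
        (∀ i j, i ≠ j → Disjoint (part i) (part j)) →
        (∀ v : V, ∃ i, v ∈ part i) →
        (∀ i j, F.Adj i j ↔ i ≠ j ∧ ∃ u ∈ part i, ∃ v ∈ part j, H.Adj u v) →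
        (∀ i, (A ∩ part i).ncard ≤ 1) →
        U = {i | ∃ a ∈ A, a ∈ part i} →
        WellLinked F U β →
        WellLinked H A (c * β / L) := by
  refine ⟨1 / 8, by norm_num, ?_⟩
  intro V ι _ _ H F part L β A U _ hdeg hne hconn hL hdisj hcover hFadj hA hU hWL
  have hconst : 1 / 8 * β / L = β / (2 * (4 : ℕ) * L) := by push_cast; ring
  rw [hconst]
  subst hU
  exact WellLinked.of_contraction hdeg hne hconn hL hdisj hcover
    (fun i j hij => ((hFadj i j).1 hij).2) hA hWL
end

section
/- Let X be an α-expander on n vertices with maximum degree Δ', and let U_A, U_B ⊆ V(X) be disjoint sets with |U_A| = |U_B| = m. Then there exist at least mα/(2Δ') vertex-disjoint paths in X, each connecting a vertex of U_A to a vertex of U_B. -/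
def IsExpander {V : Type} [Fintype V] (X : SimpleGraph V) (α : ℝ) : Prop :=
  ∀ S : Set V, 2 * S.ncard ≤ Fintype.card V →
    α * (S.ncard : ℝ) ≤ ((cutPairs X S).ncard : ℝ)

namespace SimpleGraph

variable {V W : Type*} {G H : SimpleGraph V} {A B S T : Set V} {k : ℕ}

def Separates (G : SimpleGraph V) (A B S : Set V) : Prop :=
  ∀ ⦃a b : V⦄ (p : G.Walk a b), a ∈ A → b ∈ B → ∃ s ∈ S, s ∈ p.support

structure DisjointWalks (G : SimpleGraph V) (A B : Set V) (k : ℕ) where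
  start : Fin k → V
  finish : Fin k → V
  walk : ∀ i, G.Walk (start i) (finish i)
  start_mem : ∀ i, start i ∈ A
  finish_mem : ∀ i, finish i ∈ B
  pairwise_disjoint : Pairwise fun i j => (walk i).support.Disjoint (walk j).support

lemma Separates.symm (h : G.Separates A B S) : G.Separates B A S := fun _ _ p ha hb => by
  simpa using h p.reverse hb ha

lemma Separates.anti (hGH : G ≤ H) (h : H.Separates A B S) : G.Separates A B S :=
  fun _ _ p ha hb => by simpa using h (p.mapLe hGH) ha hb

namespace DisjointWalks

def mapLe (hGH : G ≤ H) (P : G.DisjointWalks A B k) : H.DisjointWalks A B k :=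
  { P with
    walk := fun i => (P.walk i).mapLe hGH
    pairwise_disjoint := fun i j hij => by simpa using P.pairwise_disjoint hij }

lemma finish_injective (P : G.DisjointWalks A B k) : Function.Injective P.finish := by
  intro i j hij
  by_contra hne
  exact P.pairwise_disjoint hne (P.walk i).end_mem_support
    (by rw [hij]; exact (P.walk j).end_mem_support)

noncomputable def finishEquiv [Finite V] (P : G.DisjointWalks A B k) (hB : B.ncard = k) :
    Fin k ≃ B :=
  .ofBijective (fun i => ⟨P.finish i, P.finish_mem i⟩) <|
    Function.Injective.bijective_of_nat_card_le
      (fun i j hij => P.finish_injective (congrArg Subtype.val hij))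
      (by rw [Nat.card_coe_set_eq, hB, Nat.card_eq_fintype_card, Fintype.card_fin])

end DisjointWalks

lemma _root_.Set.exists_injective_fin_of_le_ncard [Finite V] (h : k ≤ S.ncard) :
    ∃ f : Fin k → V, Function.Injective f ∧ ∀ i, f i ∈ S := by
  rw [← Nat.card_coe_set_eq] at h
  exact ⟨fun i => (Finite.equivFin S).symm (Fin.castLE h i),
    Subtype.val_injective.comp ((Equiv.injective _).comp (Fin.castLE_injective h)),
    fun i => Subtype.prop _⟩

lemma DisjointWalks.nonempty_of_forall_not_adj [Finite V] (hG : ∀ x y, ¬G.Adj x y)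
    (h : ∀ S, G.Separates A B S → k ≤ S.ncard) : Nonempty (G.DisjointWalks A B k) := by
  have hsep : G.Separates A B (A ∩ B) := by
    rintro a b (_ | ⟨hadj, _⟩) ha hb
    · exact ⟨a, ⟨ha, hb⟩, by simp⟩
    · exact absurd hadj (hG _ _)
  obtain ⟨f, hf, hfS⟩ := Set.exists_injective_fin_of_le_ncard (h _ hsep)
  exact ⟨⟨f, f, fun _ => .nil, fun i => (hfS i).1, fun i => (hfS i).2,
    fun i j hij => by simpa using (hf.ne hij).symm⟩⟩

section Map

variable {f : V → W}

variable (f) in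
lemma Walk.exists_map_support_subset {a b : V} (p : G.Walk a b) :
    ∃ q : (G.map f).Walk (f a) (f b), q.support ⊆ p.support.map f := by
  induction p with
  | nil => exact ⟨.nil, by simp⟩
  | @cons u c _ hadj p ih =>
    obtain ⟨q, hq⟩ := ih
    by_cases hfuc : f u = f c
    · exact ⟨q.copy hfuc.symm rfl, fun v hv => List.mem_cons_of_mem _ (hq (by simpa using hv))⟩
    · refine ⟨.cons (map_adj_apply' hadj hfuc) q, ?_⟩
      rw [Walk.support_cons, Walk.support_cons, List.map_cons]
      exact List.cons_subset_cons _ hq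

lemma Walk.exists_lift (hf : ∀ a b, f a = f b → a = b ∨ G.Adj a b) {u w : W}
    (p : (G.map f).Walk u w) {a b : V} (ha : f a = u) (hb : f b = w) :
    ∃ q : G.Walk a b, q.support.map f ⊆ p.support := by
  induction p generalizing a with
  | nil =>
    rcases hf a b (ha.trans hb.symm) with rfl | hab
    · exact ⟨.nil, by simp [ha]⟩
    · exact ⟨hab.toWalk, by simp [ha, hb]⟩
  | cons h p ih =>
    obtain ⟨-, u', c', hadj, rfl, rfl⟩ := (map_adj' f G _ _).mp h
    obtain ⟨q, hq⟩ := ih rfl hb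
    rcases hf a u' ha with rfl | hau
    · refine ⟨.cons hadj q, ?_⟩
      rw [Walk.support_cons, Walk.support_cons, List.map_cons]
      exact List.cons_subset_cons _ hq
    · refine ⟨.cons hau (.cons hadj q), ?_⟩
      rw [Walk.support_cons, Walk.support_cons, Walk.support_cons, List.map_cons, List.map_cons, ha]
      exact List.cons_subset.mpr ⟨List.mem_cons_self, List.cons_subset_cons _ hq⟩

lemma Separates.of_map {U : Set W} (h : (G.map f).Separates (f '' A) (f '' B) U) :
    G.Separates A B (f ⁻¹' U) := by
  intro a b p ha hb
  obtain ⟨q, hq⟩ := p.exists_map_support_subset f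
  obtain ⟨s, hs, hsq⟩ := h q ⟨a, ha, rfl⟩ ⟨b, hb, rfl⟩
  obtain ⟨v, hv, rfl⟩ := List.mem_map.mp (hq hsq)
  exact ⟨v, hs, hv⟩

lemma DisjointWalks.nonempty_of_map (hf : ∀ a b, f a = f b → a = b ∨ G.Adj a b)
    (P : (G.map f).DisjointWalks (f '' A) (f '' B) k) : Nonempty (G.DisjointWalks A B k) := by
  choose a ha hfa using P.start_mem
  choose b hb hfb using P.finish_mem
  choose q hq using fun i => (P.walk i).exists_lift hf (hfa i) (hfb i)
  refine ⟨⟨a, b, q, ha, hb, fun i j hij v hvi hvj => ?_⟩⟩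
  exact P.pairwise_disjoint hij (hq i (List.mem_map_of_mem hvi)) (hq j (List.mem_map_of_mem hvj))

lemma ncard_edgeSet_map_lt [Finite V] {e : Sym2 V} (he : e ∈ G.edgeSet)
    (hdiag : (e.map f).IsDiag) : (G.map f).edgeSet.ncard < G.edgeSet.ncard := by
  have hsub : (G.map f).edgeSet ⊆ Sym2.map f '' (G.edgeSet \ {e}) := by
    rintro ⟨u, w⟩ ⟨hne, u', w', hadj, rfl, rfl⟩
    refine ⟨s(u', w'), ⟨hadj, ?_⟩, rfl⟩
    rintro rfl
    exact hne hdiag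
  calc (G.map f).edgeSet.ncard
      ≤ (Sym2.map f '' (G.edgeSet \ {e})).ncard := Set.ncard_le_ncard hsub (Set.toFinite _)
    _ ≤ (G.edgeSet \ {e}).ncard := Set.ncard_image_le (Set.toFinite _)
    _ < G.edgeSet.ncard := Set.ncard_sdiff_singleton_lt_of_mem he (Set.toFinite _)

end Map

section Contraction

variable [DecidableEq V] {x y : V}

-- `G.map (Function.update id y x)` is the contraction of the edge `xy` into `x`; it keeps the
-- vertex type `V`, with `y` becoming isolated.

lemma eq_or_adj_of_update_id_eq (hxy : G.Adj x y) {a b : V}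
    (h : Function.update id y x a = Function.update id y x b) : a = b ∨ G.Adj a b := by
  simp only [Function.update_apply, id] at h
  split_ifs at h <;> subst_vars <;> simp [hxy, hxy.symm]

lemma _root_.Set.preimage_update_id_subset_insert :
    Function.update id y x ⁻¹' S ⊆ insert y S := by
  intro v hv
  by_cases hvy : v = y
  · exact Or.inl hvy
  · exact Or.inr (by simpa [Function.update_of_ne hvy] using hv)

lemma _root_.Set.preimage_update_id_subset (hx : x ∉ S) : Function.update id y x ⁻¹' S ⊆ S := by
  intro v hv
  by_cases hvy : v = y
  · subst hvy; simp_all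
  · simpa [Function.update_of_ne hvy] using hv

end Contraction

section Combine

lemma Walk.exists_prefix_to_first_mem {a b : V} (p : G.Walk a b) (h : ∃ v ∈ p.support, v ∈ S) :
    ∃ s ∈ S, ∃ q : G.Walk a s, q.support ⊆ p.support ∧ ∀ v ∈ q.support, v ∈ S → v = s := by
  induction p with
  | nil =>
    obtain ⟨v, hv, hvS⟩ := h
    rw [Walk.support_nil, List.mem_singleton] at hv
    subst hv
    exact ⟨v, hvS, .nil, by simp, by simp⟩
  | @cons u c _ hadj p ih =>
    by_cases hu : u ∈ S
    · exact ⟨u, hu, .nil, by simp, by simp⟩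
    obtain ⟨s, hs, q, hqp, hqS⟩ := ih <| by simpa [hu] using h
    refine ⟨s, hs, .cons hadj q, ?_, ?_⟩
    · rw [Walk.support_cons, Walk.support_cons]
      exact List.cons_subset_cons _ hqp
    · rintro v hv hvS
      rw [Walk.support_cons, List.mem_cons] at hv
      rcases hv with rfl | hv
      · exact absurd hvS hu
      · exact hqS v hv hvS

lemma Separates.of_deleteEdges {x y : V} (hxy : x ≠ y) (hx : x ∈ S) (hy : y ∈ S)
    (hS : G.Separates A B S) (hT : (G.deleteEdges {s(x, y)}).Separates A S T) :
    G.Separates A B T := by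
  intro a b p ha hb
  obtain ⟨s, hs, q, hqp, hqS⟩ := p.exists_prefix_to_first_mem <| by
    obtain ⟨s, hs, hsp⟩ := hS p ha hb
    exact ⟨s, hsp, hs⟩
  have hxyq : s(x, y) ∉ q.edges := fun he =>
    hxy <| (hqS x (q.fst_mem_support_of_mem_edges he) hx).trans
      (hqS y (q.snd_mem_support_of_mem_edges he) hy).symm
  obtain ⟨t, ht, htq⟩ := hT (q.toDeleteEdge _ hxyq) ha hs
  exact ⟨t, ht, hqp (by simpa using htq)⟩

variable [DecidableEq V]

lemma DisjointWalks.exists_isPath_meets_only_at_finish (P : G.DisjointWalks A S k) :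
    ∃ Q : G.DisjointWalks A S k, ∀ i, (Q.walk i).IsPath ∧
      ∀ v ∈ (Q.walk i).support, v ∈ S → v = Q.finish i := by
  choose s hs q hqP hqS using fun i =>
    (P.walk i).exists_prefix_to_first_mem ⟨_, (P.walk i).end_mem_support, P.finish_mem i⟩
  refine ⟨⟨P.start, s, fun i => (q i).bypass, P.start_mem, hs, fun i j hij v hvi hvj => ?_⟩,
    fun i => ⟨(q i).bypass_isPath, fun v hv => hqS i v ((q i).support_bypass_subset_support hv)⟩⟩
  exact P.pairwise_disjoint hij (hqP i ((q i).support_bypass_subset_support hvi))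
    (hqP j ((q j).support_bypass_subset_support hvj))

lemma Separates.mem_of_mem_support_of_mem_support (hS : G.Separates A B S) {a b s t v : V}
    (ha : a ∈ A) (hb : b ∈ B) (hs : s ∈ S) (ht : t ∈ S) {p : G.Walk a s} {q : G.Walk b t}
    (hp : p.IsPath) (hq : q.IsPath) (hpS : ∀ u ∈ p.support, u ∈ S → u = s)
    (hqS : ∀ u ∈ q.support, u ∈ S → u = t) (hvp : v ∈ p.support) (hvq : v ∈ q.support) :
    v ∈ S := by
  by_contra hv
  obtain ⟨u, hu, hur⟩ := hS ((p.takeUntil v hvp).append (q.takeUntil v hvq).reverse) ha hb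
  rw [Walk.mem_support_append_iff, Walk.support_reverse, List.mem_reverse] at hur
  rcases hur with hur | hur
  · obtain rfl := hpS u (p.support_takeUntil_subset_support hvp hur) hu
    exact Walk.endpoint_notMem_support_takeUntil hp hvp (fun h => hv (h ▸ hu)) hur
  · obtain rfl := hqS u (q.support_takeUntil_subset_support hvq hur) hu
    exact Walk.endpoint_notMem_support_takeUntil hq hvq (fun h => hv (h ▸ hu)) hur

lemma DisjointWalks.nonempty_of_separates [Finite V] (hS : G.Separates A B S) (hk : S.ncard = k)
    (PA : G.DisjointWalks A S k) (PB : G.DisjointWalks B S k) :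
    Nonempty (G.DisjointWalks A B k) := by
  obtain ⟨QA, hQA⟩ := PA.exists_isPath_meets_only_at_finish
  obtain ⟨QB, hQB⟩ := PB.exists_isPath_meets_only_at_finish
  set σ := (QA.finishEquiv hk).trans (QB.finishEquiv hk).symm
  have hσ : ∀ i, QB.finish (σ i) = QA.finish i := fun i =>
    congrArg Subtype.val ((QB.finishEquiv hk).apply_symm_apply (QA.finishEquiv hk i))
  have hcross : ∀ i j v, v ∈ (QA.walk i).support → v ∈ (QB.walk (σ j)).support → i = j := by
    intro i j v hvi hvj
    have hv := hS.mem_of_mem_support_of_mem_support (QA.start_mem i) (QB.start_mem (σ j))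
      (QA.finish_mem i) (QB.finish_mem (σ j)) (hQA i).1 (hQB (σ j)).1 (hQA i).2 (hQB (σ j)).2
      hvi hvj
    exact QA.finish_injective <|
      ((hQA i).2 v hvi hv).symm.trans (((hQB (σ j)).2 v hvj hv).trans (hσ j))
  refine ⟨⟨QA.start, fun i => QB.start (σ i),
    fun i => (QA.walk i).append ((QB.walk (σ i)).reverse.copy (hσ i) rfl),
    QA.start_mem, fun i => QB.start_mem (σ i), fun i j hij v hvi hvj => ?_⟩⟩
  simp only [Walk.mem_support_append_iff, Walk.support_copy, Walk.support_reverse,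
    List.mem_reverse] at hvi hvj
  rcases hvi with hvi | hvi <;> rcases hvj with hvj | hvj
  · exact QA.pairwise_disjoint hij hvi hvj
  · exact hij (hcross i j v hvi hvj)
  · exact hij (hcross j i v hvj hvi).symm
  · exact QB.pairwise_disjoint (σ.injective.ne hij) hvi hvj

end Combine

section Menger

variable [Finite V]

lemma exists_separates_ncard_eq_of_map_update [DecidableEq V] {x y : V} (hxy : x ≠ y)
    (h : ∀ S, G.Separates A B S → k ≤ S.ncard) {U : Set V}
    (hU : (G.map (Function.update id y x)).Separates
      (Function.update id y x '' A) (Function.update id y x '' B) U) (hUk : U.ncard < k) :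
    ∃ S, G.Separates A B S ∧ S.ncard = k ∧ x ∈ S ∧ y ∈ S := by
  have hS := hU.of_map
  have hxU : x ∈ U := by
    by_contra hx
    exact (h _ hS).not_gt ((Set.ncard_le_ncard (Set.preimage_update_id_subset hx)).trans_lt hUk)
  refine ⟨_, hS, le_antisymm ?_ (h _ hS), by simp [Function.update_of_ne hxy, hxU],
    by simp [hxU]⟩
  calc (Function.update id y x ⁻¹' U).ncard
      ≤ (insert y U).ncard := Set.ncard_le_ncard Set.preimage_update_id_subset_insert
    _ ≤ U.ncard + 1 := Set.ncard_insert_le _ _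
    _ ≤ k := hUk

theorem menger (G : SimpleGraph V) (A B : Set V) (k : ℕ)
    (h : ∀ S, G.Separates A B S → k ≤ S.ncard) : Nonempty (G.DisjointWalks A B k) := by
  classical
  induction hn : G.edgeSet.ncard using Nat.strong_induction_on generalizing G A B with
  | _ n ih =>
  subst hn
  by_cases hG : ∀ x y, ¬G.Adj x y
  · exact DisjointWalks.nonempty_of_forall_not_adj hG h
  push Not at hG
  obtain ⟨x, y, hxy⟩ := hG
  set f := Function.update id y x
  by_cases hc : ∀ U, (G.map f).Separates (f '' A) (f '' B) U → k ≤ U.ncard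
  · have hfxy : (s(x, y).map f).IsDiag := by simp [f, hxy.ne]
    obtain ⟨P⟩ := ih _ (ncard_edgeSet_map_lt hxy hfxy) (G.map f) (f '' A) (f '' B) hc rfl
    exact P.nonempty_of_map fun a b => eq_or_adj_of_update_id_eq hxy
  push Not at hc
  obtain ⟨U, hU, hUk⟩ := hc
  obtain ⟨S, hS, hSk, hxS, hyS⟩ := exists_separates_ncard_eq_of_map_update hxy.ne h hU hUk
  have hG' : (G.deleteEdges {s(x, y)}).edgeSet.ncard < G.edgeSet.ncard := by
    rw [edgeSet_deleteEdges]
    exact Set.ncard_sdiff_singleton_lt_of_mem hxy (Set.toFinite _)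
  obtain ⟨PA⟩ := ih _ hG' _ A S (fun T hT => h T (hS.of_deleteEdges hxy.ne hxS hyS hT)) rfl
  obtain ⟨PB⟩ := ih _ hG' _ B S
    (fun T hT => h T (hS.symm.of_deleteEdges hxy.ne hxS hyS hT).symm) rfl
  obtain ⟨P⟩ := DisjointWalks.nonempty_of_separates (hS.anti (G.deleteEdges_le _)) hSk PA PB
  exact ⟨P.mapLe (G.deleteEdges_le _)⟩

end Menger

section Counting

variable {X : SimpleGraph V} {Δ : ℕ}

lemma ncard_adj_fst_mem_le [Finite V] (hdeg : ∀ v, (X.neighborSet v).ncard ≤ Δ) (W : Set V) :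
    {p : V × V | X.Adj p.1 p.2 ∧ p.1 ∈ W}.ncard ≤ W.ncard * Δ := by
  classical
  have hW := W.toFinite
  calc {p : V × V | X.Adj p.1 p.2 ∧ p.1 ∈ W}.ncard
      ≤ (⋃ w ∈ hW.toFinset, {w} ×ˢ X.neighborSet w).ncard :=
        Set.ncard_le_ncard (fun p hp => by simpa using ⟨hp.2, hp.1⟩) (Set.toFinite _)
    _ ≤ ∑ w ∈ hW.toFinset, ({w} ×ˢ X.neighborSet w).ncard := Finset.set_ncard_biUnion_le _ _
    _ ≤ ∑ _w ∈ hW.toFinset, Δ :=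
        Finset.sum_le_sum fun w _ => by simpa [Set.ncard_prod] using hdeg w
    _ = W.ncard * Δ := by rw [Finset.sum_const, smul_eq_mul, Set.ncard_eq_toFinset_card _ hW]

lemma ncard_adj_snd_mem_le [Finite V] (hdeg : ∀ v, (X.neighborSet v).ncard ≤ Δ) (W : Set V) :
    {p : V × V | X.Adj p.1 p.2 ∧ p.2 ∈ W}.ncard ≤ W.ncard * Δ := by
  have hswap : {p : V × V | X.Adj p.1 p.2 ∧ p.2 ∈ W} =
      Prod.swap '' {p : V × V | X.Adj p.1 p.2 ∧ p.1 ∈ W} := by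
    ext ⟨u, w⟩
    simp [X.adj_comm]
  rw [hswap, Set.ncard_image_of_injective _ Prod.swap_injective]
  exact ncard_adj_fst_mem_le hdeg W

def reachableAvoiding (X : SimpleGraph V) (A S : Set V) : Set V :=
  {v | ∃ a ∈ A, ∃ p : X.Walk a v, ∀ w ∈ p.support, w ∉ S}

lemma diff_subset_reachableAvoiding (A S : Set V) : A \ S ⊆ X.reachableAvoiding A S :=
  fun a ⟨ha, haS⟩ => ⟨a, ha, .nil, by simpa using haS⟩

lemma Separates.disjoint_reachableAvoiding {A B S : Set V} (h : X.Separates A B S) :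
    Disjoint (X.reachableAvoiding A S) (X.reachableAvoiding B S) := by
  rw [Set.disjoint_left]
  rintro v ⟨a, ha, p, hp⟩ ⟨b, hb, q, hq⟩
  obtain ⟨s, hs, hsp⟩ := h (p.append q.reverse) ha hb
  rw [Walk.mem_support_append_iff, Walk.support_reverse, List.mem_reverse] at hsp
  exact hsp.elim (fun h => hp s h hs) (fun h => hq s h hs)

lemma _root_.Set.ncard_add_ncard_le_of_disjoint [Fintype V] {s t : Set V} (h : Disjoint s t) :
    s.ncard + t.ncard ≤ Fintype.card V := by
  rw [← Set.ncard_union_eq h, ← Nat.card_eq_fintype_card]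
  exact Set.ncard_le_card _

end Counting

end SimpleGraph

section Cut

open SimpleGraph

variable {V : Type} {X : SimpleGraph V}

lemma cutPairs_reachableAvoiding_subset (A S : Set V) :
    cutPairs X (X.reachableAvoiding A S) ⊆ {p : V × V | X.Adj p.1 p.2 ∧ p.2 ∈ S} := by
  rintro ⟨u, w⟩ ⟨hadj, ⟨a, ha, p, hp⟩, hw⟩
  refine ⟨hadj, by_contra fun hwS => hw ⟨a, ha, p.concat hadj, fun v hv => ?_⟩⟩
  rw [Walk.support_concat, List.mem_append, List.mem_singleton] at hv
  rcases hv with hv | rfl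
  · exact hp v hv
  · exact hwS

end Cut

namespace IsExpander

open SimpleGraph

variable {V : Type} [Fintype V] {X : SimpleGraph V} {α : ℝ} {Δ : ℕ}

lemma le_of_neighborSet_ncard_le (hexp : IsExpander X α)
    (hdeg : ∀ v, (X.neighborSet v).ncard ≤ Δ) {W : Set V} (hW : W.Nonempty)
    (hW2 : 2 * W.ncard ≤ Fintype.card V) : α ≤ Δ := by
  have hcut : (cutPairs X W).ncard ≤ W.ncard * Δ :=
    (Set.ncard_le_ncard (t := {p : V × V | X.Adj p.1 p.2 ∧ p.1 ∈ W})
      (fun p hp => ⟨hp.1, hp.2.1⟩)).trans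
      (ncard_adj_fst_mem_le hdeg W)
  have hpos : (0 : ℝ) < W.ncard := by exact_mod_cast (Set.ncard_pos W.toFinite).mpr hW
  have := (hexp W hW2).trans (by exact_mod_cast hcut : ((cutPairs X W).ncard : ℝ) ≤ W.ncard * Δ)
  nlinarith

lemma mul_ncard_sub_le (hα : 0 ≤ α) (hexp : IsExpander X α)
    (hdeg : ∀ v, (X.neighborSet v).ncard ≤ Δ) {W S : Set V}
    (hR : 2 * (X.reachableAvoiding W S).ncard ≤ Fintype.card V) :
    α * ((W.ncard : ℝ) - S.ncard) ≤ Δ * S.ncard := by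
  set R := X.reachableAvoiding W S
  have hcut : (cutPairs X R).ncard ≤ S.ncard * Δ :=
    (Set.ncard_le_ncard (cutPairs_reachableAvoiding_subset W S) (Set.toFinite _)).trans
      (ncard_adj_snd_mem_le hdeg S)
  have hWR : W.ncard ≤ R.ncard + S.ncard :=
    calc W.ncard ≤ (W \ S).ncard + S.ncard := by
          rw [← Set.ncard_union_eq Set.disjoint_sdiff_left, Set.sdiff_union_self]
          exact Set.ncard_le_ncard Set.subset_union_left (Set.toFinite _)
      _ ≤ R.ncard + S.ncard :=
          Nat.add_le_add_right (Set.ncard_le_ncard (diff_subset_reachableAvoiding W S)) _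
  have hWR' : (W.ncard : ℝ) - S.ncard ≤ R.ncard := by
    rw [sub_le_iff_le_add]; exact_mod_cast hWR
  calc α * ((W.ncard : ℝ) - S.ncard) ≤ α * R.ncard := mul_le_mul_of_nonneg_left hWR' hα
    _ ≤ (cutPairs X R).ncard := hexp R hR
    _ ≤ Δ * S.ncard := by rw [mul_comm]; exact_mod_cast hcut

lemma le_ncard_of_separates (hα : 0 ≤ α) (hexp : IsExpander X α)
    (hdeg : ∀ v, (X.neighborSet v).ncard ≤ Δ) {m : ℕ} {UA UB S : Set V} (hd : Disjoint UA UB)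
    (hA : UA.ncard = m) (hB : UB.ncard = m) (hS : X.Separates UA UB S) :
    (m : ℝ) * α / (2 * Δ) ≤ S.ncard := by
  rcases Nat.eq_zero_or_pos Δ with rfl | hΔ
  · simp
  rcases Nat.eq_zero_or_pos m with rfl | hm
  · simp
  have hαΔ : α ≤ Δ := hexp.le_of_neighborSet_ncard_le hdeg
    (Set.nonempty_of_ncard_ne_zero (by omega : UA.ncard ≠ 0))
    (by have := Set.ncard_add_ncard_le_of_disjoint hd; omega)
  have key : α * ((m : ℝ) - S.ncard) ≤ Δ * S.ncard := by
    have := Set.ncard_add_ncard_le_of_disjoint hS.disjoint_reachableAvoiding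
    rcases (by omega : 2 * (X.reachableAvoiding UA S).ncard ≤ Fintype.card V ∨
        2 * (X.reachableAvoiding UB S).ncard ≤ Fintype.card V) with h | h
    · simpa [hA] using hexp.mul_ncard_sub_le hα hdeg h
    · simpa [hB] using hexp.mul_ncard_sub_le hα hdeg h
  have hΔ' : (0 : ℝ) < Δ := by exact_mod_cast hΔ
  rw [div_le_iff₀ (by positivity)]
  nlinarith [(Nat.cast_nonneg S.ncard : (0 : ℝ) ≤ S.ncard)]

end IsExpander

/-- In an `α`-expander with maximum degree `Δ'`, any two disjoint vertex sets of size `m`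
are joined by at least `mα/(2Δ')` vertex-disjoint paths. -/
theorem stmt17 {V : Type} [Fintype V] (X : SimpleGraph V) (α : ℝ) (Δ' m : ℕ)
    (hα : 0 < α) (hexp : IsExpander X α)
    (hdeg : ∀ v : V, (X.neighborSet v).ncard ≤ Δ')
    (UA UB : Set V) (hd : Disjoint UA UB)
    (hA : UA.ncard = m) (hB : UB.ncard = m) :
    ∃ (t : ℕ) (P : Fin t → List V),
      ((m : ℝ) * α / (2 * Δ') ≤ t) ∧
      (∀ i, P i ≠ [] ∧ (P i).Chain' X.Adj ∧ (P i).Nodup ∧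
        (∃ a, (P i).head? = some a ∧ a ∈ UA) ∧
        (∃ b, (P i).getLast? = some b ∧ b ∈ UB)) ∧
      (∀ i j, i ≠ j → ∀ v, v ∈ P i → v ∉ P j) := by
  classical
  obtain ⟨P⟩ := X.menger UA UB ⌈(m : ℝ) * α / (2 * Δ')⌉₊ fun S hS =>
    Nat.ceil_le.mpr (hexp.le_ncard_of_separates hα.le hdeg hd hA hB hS)
  refine ⟨_, fun i => (P.walk i).bypass.support, Nat.le_ceil _, fun i =>
    ⟨(P.walk i).bypass.support_ne_nil, (P.walk i).bypass.isChain_adj_support,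
    (P.walk i).bypass_isPath.support_nodup,
    ⟨_, (List.head?_eq_some_head _).trans (congrArg some (P.walk i).bypass.head_support),
      P.start_mem i⟩,
    ⟨_, (List.getLast?_eq_some_getLast _).trans (congrArg some (P.walk i).bypass.getLast_support),
      P.finish_mem i⟩⟩, fun i j hij v hvi hvj => ?_⟩
  exact P.pairwise_disjoint hij ((P.walk i).support_bypass_subset_support hvi)
    ((P.walk j).support_bypass_subset_support hvj)
end
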